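/- arXiv:0710.4015 — 8 statements merged into one kernel-verified Lean document; each statement's English description precedes it below -/
import Mathlib

section
/- Let N be a positive integer and let u1, u2, q_1,…,q_N, r_1,…,r_N : ℝ³ → ℝ be smooth functions of (x,y,t). Suppose they satisfy the system: (i) u1_y − u1_{xx} − 2 u2_x = 0; (ii) 2 u1_t − 3 (u2 + u1_x)_y + 3 u2_{xx} + u1_{xxx} − 6 u1 u1_x + 2 ∑_{i=1}^N (q_i r_i)_x = 0; (iii) q_{i,y} = q_{i,xx} + 2 u1 q_i and r_{i,y} = −r_{i,xx} − 2 u1 r_i for i = 1,…,N. Then u := u1 together with q_i, r_i satisfies the first type of KP equation with self-consistent sources: (4 u_t − 12 u u_x − u_{xxx})_x − 3 u_{yy} + 4 ∑_{i=1}^N (q_i r_i)_{xx} = 0. -/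
/-- Partial derivative in the first coordinate `x` of a function on `ℝ³ = ℝ × ℝ × ℝ`
(coordinates `(x, y, t)`). -/
noncomputable def pX (f : ℝ × ℝ × ℝ → ℝ) (p : ℝ × ℝ × ℝ) : ℝ :=
  deriv (fun s => f (s, p.2.1, p.2.2)) p.1

/-- Partial derivative in the second coordinate `y`. -/
noncomputable def pY (f : ℝ × ℝ × ℝ → ℝ) (p : ℝ × ℝ × ℝ) : ℝ :=
  deriv (fun s => f (p.1, s, p.2.2)) p.2.1

/-- Partial derivative in the third coordinate `t`. -/
noncomputable def pT (f : ℝ × ℝ × ℝ → ℝ) (p : ℝ × ℝ × ℝ) : ℝ :=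
  deriv (fun s => f (p.1, p.2.1, s)) p.2.2

section aux
variable {f g : ℝ × ℝ × ℝ → ℝ}

lemma sliceX_hasDerivAt (hf : Differentiable ℝ f) (p : ℝ × ℝ × ℝ) :
    HasDerivAt (fun s => f (s, p.2.1, p.2.2)) (fderiv ℝ f p (1, 0, 0)) p.1 := by
  have hg : HasDerivAt (fun s : ℝ => ((s, p.2.1, p.2.2) : ℝ × ℝ × ℝ)) (1, 0, 0) p.1 :=
    (hasDerivAt_id p.1).prodMk (hasDerivAt_const _ _)
  exact (hf p).hasFDerivAt.comp_hasDerivAt p.1 hg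

lemma sliceY_hasDerivAt (hf : Differentiable ℝ f) (p : ℝ × ℝ × ℝ) :
    HasDerivAt (fun s => f (p.1, s, p.2.2)) (fderiv ℝ f p (0, 1, 0)) p.2.1 := by
  have hg : HasDerivAt (fun s : ℝ => ((p.1, s, p.2.2) : ℝ × ℝ × ℝ)) (0, 1, 0) p.2.1 :=
    (hasDerivAt_const _ _).prodMk ((hasDerivAt_id _).prodMk (hasDerivAt_const _ _))
  exact (hf p).hasFDerivAt.comp_hasDerivAt p.2.1 hg

lemma sliceT_hasDerivAt (hf : Differentiable ℝ f) (p : ℝ × ℝ × ℝ) :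
    HasDerivAt (fun s => f (p.1, p.2.1, s)) (fderiv ℝ f p (0, 0, 1)) p.2.2 := by
  have hg : HasDerivAt (fun s : ℝ => ((p.1, p.2.1, s) : ℝ × ℝ × ℝ)) (0, 0, 1) p.2.2 :=
    (hasDerivAt_const _ _).prodMk ((hasDerivAt_const _ _).prodMk (hasDerivAt_id _))
  exact (hf p).hasFDerivAt.comp_hasDerivAt p.2.2 hg

lemma pX_apply (hf : ContDiff ℝ (⊤ : ℕ∞) f) (p : ℝ × ℝ × ℝ) :
    pX f p = fderiv ℝ f p (1, 0, 0) :=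
  (sliceX_hasDerivAt (hf.differentiable (by simp)) p).deriv

lemma pY_apply (hf : ContDiff ℝ (⊤ : ℕ∞) f) (p : ℝ × ℝ × ℝ) :
    pY f p = fderiv ℝ f p (0, 1, 0) :=
  (sliceY_hasDerivAt (hf.differentiable (by simp)) p).deriv

lemma pT_apply (hf : ContDiff ℝ (⊤ : ℕ∞) f) (p : ℝ × ℝ × ℝ) :
    pT f p = fderiv ℝ f p (0, 0, 1) :=
  (sliceT_hasDerivAt (hf.differentiable (by simp)) p).deriv

lemma pX_eq (hf : ContDiff ℝ (⊤ : ℕ∞) f) : pX f = fun p => fderiv ℝ f p (1, 0, 0) :=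
  funext fun p => pX_apply hf p

lemma pY_eq (hf : ContDiff ℝ (⊤ : ℕ∞) f) : pY f = fun p => fderiv ℝ f p (0, 1, 0) :=
  funext fun p => pY_apply hf p

lemma pT_eq (hf : ContDiff ℝ (⊤ : ℕ∞) f) : pT f = fun p => fderiv ℝ f p (0, 0, 1) :=
  funext fun p => pT_apply hf p

lemma contDiff_pX (hf : ContDiff ℝ (⊤ : ℕ∞) f) : ContDiff ℝ (⊤ : ℕ∞) (pX f) := by
  rw [pX_eq hf]; exact (hf.fderiv_right (by simp)).clm_apply contDiff_const

lemma contDiff_pY (hf : ContDiff ℝ (⊤ : ℕ∞) f) : ContDiff ℝ (⊤ : ℕ∞) (pY f) := by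
  rw [pY_eq hf]; exact (hf.fderiv_right (by simp)).clm_apply contDiff_const

lemma contDiff_pT (hf : ContDiff ℝ (⊤ : ℕ∞) f) : ContDiff ℝ (⊤ : ℕ∞) (pT f) := by
  rw [pT_eq hf]; exact (hf.fderiv_right (by simp)).clm_apply contDiff_const

lemma fderiv_apply_apply (hf : ContDiff ℝ (⊤ : ℕ∞) f) (v w p : ℝ × ℝ × ℝ) :
    fderiv ℝ (fun z => fderiv ℝ f z v) p w = fderiv ℝ (fderiv ℝ f) p w v := by
  have h1 : DifferentiableAt ℝ (fderiv ℝ f) p :=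
    ((hf.fderiv_right (m := (⊤ : ℕ∞)) (by simp)).differentiable (by simp)) p
  have e : (fun z => fderiv ℝ f z v)
      = (ContinuousLinearMap.apply ℝ ℝ v) ∘ (fderiv ℝ f) := rfl
  rw [e, fderiv_comp p (ContinuousLinearMap.apply ℝ ℝ v).differentiableAt h1]
  simp

lemma pXpY_comm (hf : ContDiff ℝ (⊤ : ℕ∞) f) : pX (pY f) = pY (pX f) := by
  have hsym : ∀ p v w,
      fderiv ℝ (fderiv ℝ f) p v w = fderiv ℝ (fderiv ℝ f) p w v := by
    intro p v w
    exact second_derivative_symmetric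
      (fun y => ((hf.differentiable (by simp)) y).hasFDerivAt)
      ((((hf.fderiv_right (m := (⊤ : ℕ∞)) (by simp)).differentiable (by simp)) p).hasFDerivAt) v w
  funext p
  rw [pX_apply (contDiff_pY hf), pY_apply (contDiff_pX hf), pY_eq hf, pX_eq hf,
    fderiv_apply_apply hf, fderiv_apply_apply hf]
  exact hsym p (1, 0, 0) (0, 1, 0)

end aux

/-- solutions of the `(n,k) = (2,3)` member of the extended KP hierarchy
satisfy the first type of KP equation with self-consistent sources. -/
theorem stmt_0 (N : ℕ) (hN : 0 < N)
    (u1 u2 : ℝ × ℝ × ℝ → ℝ) (q r : Fin N → ℝ × ℝ × ℝ → ℝ)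
    (hu1 : ContDiff ℝ (⊤ : ℕ∞) u1) (hu2 : ContDiff ℝ (⊤ : ℕ∞) u2)
    (hq : ∀ i, ContDiff ℝ (⊤ : ℕ∞) (q i)) (hr : ∀ i, ContDiff ℝ (⊤ : ℕ∞) (r i))
    (h1 : ∀ p, pY u1 p - pX (pX u1) p - 2 * pX u2 p = 0)
    (h2 : ∀ p, 2 * pT u1 p - 3 * pY (fun z => u2 z + pX u1 z) p + 3 * pX (pX u2) p
        + pX (pX (pX u1)) p - 6 * u1 p * pX u1 p
        + 2 * ∑ i, pX (fun z => q i z * r i z) p = 0)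
    (h3 : ∀ i, ∀ p, pY (q i) p = pX (pX (q i)) p + 2 * u1 p * q i p)
    (h4 : ∀ i, ∀ p, pY (r i) p = -(pX (pX (r i)) p) - 2 * u1 p * r i p) :
    ∀ p, pX (fun z => 4 * pT u1 z - 12 * u1 z * pX u1 z - pX (pX (pX u1)) z) p
      - 3 * pY (pY u1) p + 4 * ∑ i, pX (pX (fun z => q i z * r i z)) p = 0 := by
  intro p
  -- smoothness facts
  have cqr : ∀ i, ContDiff ℝ (⊤ : ℕ∞) (fun z => q i z * r i z) := fun i => (hq i).mul (hr i)
  have c1 : ContDiff ℝ (⊤ : ℕ∞) (pX u1) := contDiff_pX hu1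
  have c2 : ContDiff ℝ (⊤ : ℕ∞) (pX (pX u1)) := contDiff_pX c1
  have c3 : ContDiff ℝ (⊤ : ℕ∞) (pX (pX (pX u1))) := contDiff_pX c2
  have cT : ContDiff ℝ (⊤ : ℕ∞) (pT u1) := contDiff_pT hu1
  have cY : ContDiff ℝ (⊤ : ℕ∞) (pY u1) := contDiff_pY hu1
  have cu2x : ContDiff ℝ (⊤ : ℕ∞) (pX u2) := contDiff_pX hu2
  have cu2xx : ContDiff ℝ (⊤ : ℕ∞) (pX (pX u2)) := contDiff_pX cu2x
  have cm : ContDiff ℝ (⊤ : ℕ∞) (fun z => u1 z * pX u1 z) := hu1.mul c1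
  have cs : ContDiff ℝ (⊤ : ℕ∞) (fun z => u2 z + pX u1 z) := hu2.add c1
  have csY : ContDiff ℝ (⊤ : ℕ∞) (pY (fun z => u2 z + pX u1 z)) := contDiff_pY cs
  have cqrX : ∀ i, ContDiff ℝ (⊤ : ℕ∞) (pX (fun z => q i z * r i z)) := fun i => contDiff_pX (cqr i)
  have cXYu2 : ContDiff ℝ (⊤ : ℕ∞) (pY u2) := contDiff_pY hu2
  have cYx1 : ContDiff ℝ (⊤ : ℕ∞) (pY (pX u1)) := contDiff_pY c1
  -- generic slice derivatives
  have Hx : ∀ (f : ℝ × ℝ × ℝ → ℝ), ContDiff ℝ (⊤ : ℕ∞) f → ∀ z : ℝ × ℝ × ℝ,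
      HasDerivAt (fun s => f (s, z.2.1, z.2.2)) (pX f z) z.1 := by
    intro f hf z
    rw [pX_apply hf]
    exact sliceX_hasDerivAt (hf.differentiable (by simp)) z
  have Hy : ∀ (f : ℝ × ℝ × ℝ → ℝ), ContDiff ℝ (⊤ : ℕ∞) f → ∀ z : ℝ × ℝ × ℝ,
      HasDerivAt (fun s => f (z.1, s, z.2.2)) (pY f z) z.2.1 := by
    intro f hf z
    rw [pY_apply hf]
    exact sliceY_hasDerivAt (hf.differentiable (by simp)) z
  -- the two equation functions vanish identically
  have hA0 : (fun z => pY u1 z - pX (pX u1) z - 2 * pX u2 z) = fun _ => (0 : ℝ) :=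
    funext h1
  have hB0 : (fun z => 2 * pT u1 z - 3 * pY (fun w => u2 w + pX u1 w) z + 3 * pX (pX u2) z
      + pX (pX (pX u1)) z - 6 * u1 z * pX u1 z
      + 2 * ∑ i, pX (fun w => q i w * r i w) z) = fun _ => (0 : ℝ) := funext h2
  -- E1 : pY of the first equation
  have HA : HasDerivAt
      (fun s => pY u1 (p.1, s, p.2.2) - pX (pX u1) (p.1, s, p.2.2)
        - 2 * pX u2 (p.1, s, p.2.2))
      (pY (pY u1) p - pY (pX (pX u1)) p - 2 * pY (pX u2) p) p.2.1 :=
    ((Hy _ cY p).sub (Hy _ c2 p)).sub (HasDerivAt.const_mul (2 : ℝ) (Hy _ cu2x p))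
  have E1 : pY (pY u1) p - pY (pX (pX u1)) p - 2 * pY (pX u2) p = 0 := by
    rw [← HA.deriv]
    have : pY (fun z => pY u1 z - pX (pX u1) z - 2 * pX u2 z) p = 0 := by
      rw [hA0]; simp [pY]
    exact this
  -- E2 : pX pX of the first equation
  have hAx : pX (fun z => pY u1 z - pX (pX u1) z - 2 * pX u2 z)
      = fun z => pX (pY u1) z - pX (pX (pX u1)) z - 2 * pX (pX u2) z := by
    funext z
    exact (((Hx _ cY z).sub (Hx _ c2 z)).sub
      (HasDerivAt.const_mul (2 : ℝ) (Hx _ cu2x z))).deriv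
  have HA2 : HasDerivAt
      (fun s => pX (pY u1) (s, p.2.1, p.2.2) - pX (pX (pX u1)) (s, p.2.1, p.2.2)
        - 2 * pX (pX u2) (s, p.2.1, p.2.2))
      (pX (pX (pY u1)) p - pX (pX (pX (pX u1))) p - 2 * pX (pX (pX u2)) p) p.1 :=
    ((Hx _ (contDiff_pX cY) p).sub (Hx _ c3 p)).sub
      (HasDerivAt.const_mul (2 : ℝ) (Hx _ cu2xx p))
  have E2 : pX (pX (pY u1)) p - pX (pX (pX (pX u1))) p - 2 * pX (pX (pX u2)) p = 0 := by
    have h0 : pX (pX (fun z => pY u1 z - pX (pX u1) z - 2 * pX u2 z)) p = 0 := by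
      rw [hA0]; simp [pX]
    rw [hAx] at h0
    rw [← HA2.deriv]
    exact h0
  -- expand pY (u2 + pX u1)
  have hsY : pY (fun z => u2 z + pX u1 z) = fun z => pY u2 z + pY (pX u1) z := by
    funext z
    exact ((Hy _ hu2 z).add (Hy _ c1 z)).deriv
  -- E3 : pX of the second equation
  have T5 : HasDerivAt
      (fun s => 6 * u1 (s, p.2.1, p.2.2) * pX u1 (s, p.2.1, p.2.2))
      (6 * pX (fun z => u1 z * pX u1 z) p) p.1 := by
    simp only [mul_assoc]
    exact HasDerivAt.const_mul (6 : ℝ) (Hx _ cm p)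
  have T6 : HasDerivAt
      (fun s => ∑ i, pX (fun w => q i w * r i w) (s, p.2.1, p.2.2))
      (∑ i, pX (pX (fun w => q i w * r i w)) p) p.1 :=
    HasDerivAt.fun_sum (fun i _ => Hx _ (cqrX i) p)
  have HB : HasDerivAt
      (fun s => 2 * pT u1 (s, p.2.1, p.2.2)
        - 3 * pY (fun w => u2 w + pX u1 w) (s, p.2.1, p.2.2)
        + 3 * pX (pX u2) (s, p.2.1, p.2.2) + pX (pX (pX u1)) (s, p.2.1, p.2.2)
        - 6 * u1 (s, p.2.1, p.2.2) * pX u1 (s, p.2.1, p.2.2)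
        + 2 * ∑ i, pX (fun w => q i w * r i w) (s, p.2.1, p.2.2))
      (2 * pX (pT u1) p - 3 * pX (pY (fun w => u2 w + pX u1 w)) p
        + 3 * pX (pX (pX u2)) p + pX (pX (pX (pX u1))) p
        - 6 * pX (fun z => u1 z * pX u1 z) p
        + 2 * ∑ i, pX (pX (fun w => q i w * r i w)) p) p.1 :=
    (((((HasDerivAt.const_mul (2 : ℝ) (Hx _ cT p)).sub
        (HasDerivAt.const_mul (3 : ℝ) (Hx _ csY p))).add
        (HasDerivAt.const_mul (3 : ℝ) (Hx _ cu2xx p))).add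
        (Hx _ c3 p)).sub T5).add (HasDerivAt.const_mul (2 : ℝ) T6)
  have E3 : 2 * pX (pT u1) p - 3 * pX (pY (fun w => u2 w + pX u1 w)) p
      + 3 * pX (pX (pX u2)) p + pX (pX (pX (pX u1))) p
      - 6 * pX (fun z => u1 z * pX u1 z) p
      + 2 * ∑ i, pX (pX (fun w => q i w * r i w)) p = 0 := by
    rw [← HB.deriv]
    have : pX (fun z => 2 * pT u1 z - 3 * pY (fun w => u2 w + pX u1 w) z + 3 * pX (pX u2) z
        + pX (pX (pX u1)) z - 6 * u1 z * pX u1 z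
        + 2 * ∑ i, pX (fun w => q i w * r i w) z) p = 0 := by
      rw [hB0]; simp [pX]
    exact this
  -- expand the middle term of E3
  have hmid : pX (pY (fun w => u2 w + pX u1 w)) p
      = pX (pY u2) p + pX (pY (pX u1)) p := by
    rw [hsY]
    exact ((Hx _ cXYu2 p).add (Hx _ cYx1 p)).deriv
  rw [hmid] at E3
  -- commutations
  have k1 : pX (pY u2) = pY (pX u2) := pXpY_comm hu2
  have k2 : pX (pY u1) = pY (pX u1) := pXpY_comm hu1
  have k3 : pX (pY (pX u1)) = pY (pX (pX u1)) := pXpY_comm c1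
  rw [k1, k3] at E3
  rw [k2, k3] at E2
  -- expand the goal's pX term
  have T2' : HasDerivAt
      (fun s => 12 * u1 (s, p.2.1, p.2.2) * pX u1 (s, p.2.1, p.2.2))
      (12 * pX (fun z => u1 z * pX u1 z) p) p.1 := by
    simp only [mul_assoc]
    exact HasDerivAt.const_mul (12 : ℝ) (Hx _ cm p)
  have HG : HasDerivAt
      (fun s => 4 * pT u1 (s, p.2.1, p.2.2)
        - 12 * u1 (s, p.2.1, p.2.2) * pX u1 (s, p.2.1, p.2.2)
        - pX (pX (pX u1)) (s, p.2.1, p.2.2))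
      (4 * pX (pT u1) p - 12 * pX (fun z => u1 z * pX u1 z) p
        - pX (pX (pX (pX u1))) p) p.1 :=
    ((HasDerivAt.const_mul (4 : ℝ) (Hx _ cT p)).sub T2').sub (Hx _ c3 p)
  have eG : pX (fun z => 4 * pT u1 z - 12 * u1 z * pX u1 z - pX (pX (pX u1)) z) p
      = 4 * pX (pT u1) p - 12 * pX (fun z => u1 z * pX u1 z) p
        - pX (pX (pX (pX u1))) p := HG.deriv
  rw [eG]
  linarith [E1, E2, E3]
end

section
/- Let N be a positive integer and let u, v, q_1,…,q_N, r_1,…,r_N, ψ, φ_1,…,φ_N : ℝ³ → ℝ be smooth functions of (x,y,t). Assume: (i) v_x = u_y; (ii) 4 u_t − 12 u u_x − u_{xxx} − 3 v_y + 4 ∑_{i=1}^N (q_i r_i)_x = 0; (iii) q_{i,y} = q_{i,xx} + 2 u q_i and r_{i,y} = −r_{i,xx} − 2 u r_i; (iv) ψ_y = ψ_{xx} + 2 u ψ; (v) φ_{i,x} = r_i ψ and φ_{i,y} = r_i ψ_x − r_{i,x} ψ for i = 1,…,N. Define χ := ψ_t − ψ_{xxx} − 3 u ψ_x − (3/2)(v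 + u_x) ψ − ∑_{i=1}^N q_i φ_i. Then χ_y = χ_{xx} + 2 u χ. (This is the content of the Lax representation ψ_y = (∂² + 2u)ψ, ψ_t = (∂³ + 3u∂ + (3/2)D^{-1}u_y + (3/2)u_x + ∑ q_i ∂^{-1} r_i)ψ for the first type of KP equation with self-consistent sources.) -/
/-! ### Auxiliary infrastructure: directional derivatives as `fderiv` -/

noncomputable def pd (w : ℝ × ℝ × ℝ) (f : ℝ × ℝ × ℝ → ℝ) : ℝ × ℝ × ℝ → ℝ :=
  fun p => fderiv ℝ f p w

def eX : ℝ × ℝ × ℝ := (1, 0, 0)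
def eY : ℝ × ℝ × ℝ := (0, 1, 0)
def eT : ℝ × ℝ × ℝ := (0, 0, 1)

lemma pd_contDiff (w : ℝ × ℝ × ℝ) {f : ℝ × ℝ × ℝ → ℝ} (hf : ContDiff ℝ (⊤ : ℕ∞) f) :
    ContDiff ℝ (⊤ : ℕ∞) (pd w f) :=
  (hf.fderiv_right ((by simp))).clm_apply contDiff_const

lemma pX_eq_pd {f : ℝ × ℝ × ℝ → ℝ} (hf : Differentiable ℝ f) :
    pX f = pd eX f := by
  funext p
  have hm : HasDerivAt (fun s : ℝ => ((s, p.2.1, p.2.2) : ℝ × ℝ × ℝ)) eX p.1 :=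
    HasDerivAt.prodMk (hasDerivAt_id p.1) (HasDerivAt.prodMk (hasDerivAt_const p.1 p.2.1) (hasDerivAt_const p.1 p.2.2))
  have h2 : HasFDerivAt f (fderiv ℝ f p) ((fun s : ℝ => ((s, p.2.1, p.2.2) : ℝ × ℝ × ℝ)) p.1) := by
    simpa using (hf p).hasFDerivAt
  exact (h2.comp_hasDerivAt p.1 hm).deriv

lemma pY_eq_pd {f : ℝ × ℝ × ℝ → ℝ} (hf : Differentiable ℝ f) :
    pY f = pd eY f := by
  funext p
  have hm : HasDerivAt (fun s : ℝ => ((p.1, s, p.2.2) : ℝ × ℝ × ℝ)) eY p.2.1 :=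
    HasDerivAt.prodMk (hasDerivAt_const p.2.1 p.1) (HasDerivAt.prodMk (hasDerivAt_id p.2.1) (hasDerivAt_const p.2.1 p.2.2))
  have h2 : HasFDerivAt f (fderiv ℝ f p) ((fun s : ℝ => ((p.1, s, p.2.2) : ℝ × ℝ × ℝ)) p.2.1) := by
    simpa using (hf p).hasFDerivAt
  exact (h2.comp_hasDerivAt p.2.1 hm).deriv

lemma pT_eq_pd {f : ℝ × ℝ × ℝ → ℝ} (hf : Differentiable ℝ f) :
    pT f = pd eT f := by
  funext p
  have hm : HasDerivAt (fun s : ℝ => ((p.1, p.2.1, s) : ℝ × ℝ × ℝ)) eT p.2.2 :=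
    HasDerivAt.prodMk (hasDerivAt_const p.2.2 p.1) (HasDerivAt.prodMk (hasDerivAt_const p.2.2 p.2.1) (hasDerivAt_id p.2.2))
  have h2 : HasFDerivAt f (fderiv ℝ f p) ((fun s : ℝ => ((p.1, p.2.1, s) : ℝ × ℝ × ℝ)) p.2.2) := by
    simpa using (hf p).hasFDerivAt
  exact (h2.comp_hasDerivAt p.2.2 hm).deriv

lemma pdA (w : ℝ × ℝ × ℝ) {f g : ℝ × ℝ × ℝ → ℝ} (hf : ContDiff ℝ (⊤ : ℕ∞) f)
    (hg : ContDiff ℝ (⊤ : ℕ∞) g) (p : ℝ × ℝ × ℝ) :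
    pd w (fun z => f z + g z) p = pd w f p + pd w g p := by
  simp only [pd, fderiv_fun_add (hf.differentiable (by simp) p) (hg.differentiable (by simp) p),
    ContinuousLinearMap.add_apply]

lemma pdS (w : ℝ × ℝ × ℝ) {f g : ℝ × ℝ × ℝ → ℝ} (hf : ContDiff ℝ (⊤ : ℕ∞) f)
    (hg : ContDiff ℝ (⊤ : ℕ∞) g) (p : ℝ × ℝ × ℝ) :
    pd w (fun z => f z - g z) p = pd w f p - pd w g p := by
  simp only [pd, fderiv_fun_sub (hf.differentiable (by simp) p) (hg.differentiable (by simp) p),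
    ContinuousLinearMap.sub_apply]

lemma pdM (w : ℝ × ℝ × ℝ) {f g : ℝ × ℝ × ℝ → ℝ} (hf : ContDiff ℝ (⊤ : ℕ∞) f)
    (hg : ContDiff ℝ (⊤ : ℕ∞) g) (p : ℝ × ℝ × ℝ) :
    pd w (fun z => f z * g z) p = pd w f p * g p + f p * pd w g p := by
  simp only [pd, fderiv_fun_mul (hf.differentiable (by simp) p) (hg.differentiable (by simp) p),
    ContinuousLinearMap.add_apply, ContinuousLinearMap.smul_apply, smul_eq_mul]
  ring

lemma pdC (w : ℝ × ℝ × ℝ) (c : ℝ) {f : ℝ × ℝ × ℝ → ℝ} (hf : ContDiff ℝ (⊤ : ℕ∞) f) (p : ℝ × ℝ × ℝ) :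
    pd w (fun z => c * f z) p = c * pd w f p := by
  simp only [pd, fderiv_const_mul (hf.differentiable (by simp) p) c,
    ContinuousLinearMap.smul_apply, smul_eq_mul]

lemma pdSum {ι : Type*} (s : Finset ι) (w : ℝ × ℝ × ℝ) {f : ι → ℝ × ℝ × ℝ → ℝ}
    (hf : ∀ i ∈ s, ContDiff ℝ (⊤ : ℕ∞) (f i)) (p : ℝ × ℝ × ℝ) :
    pd w (fun z => ∑ i ∈ s, f i z) p = ∑ i ∈ s, pd w (f i) p := by
  simp only [pd, fderiv_fun_sum (fun i hi => (hf i hi).differentiable (by simp) p)]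
  simp

lemma pd_comm (v w : ℝ × ℝ × ℝ) {f : ℝ × ℝ × ℝ → ℝ} (hf : ContDiff ℝ (⊤ : ℕ∞) f) :
    pd v (pd w f) = pd w (pd v f) := by
  funext p
  have hfd : Differentiable ℝ f := hf.differentiable (by simp)
  have hfd2 : Differentiable ℝ (fderiv ℝ f) :=
    (hf.fderiv_right (m := (⊤ : ℕ∞)) ((by simp))).differentiable (by simp)
  have key : ∀ a b : ℝ × ℝ × ℝ,
      fderiv ℝ (fun z => fderiv ℝ f z a) p b = fderiv ℝ (fderiv ℝ f) p b a := by
    intro a b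
    rw [fderiv_clm_apply (hfd2 p) (differentiableAt_const a)]
    simp
  have symm := second_derivative_symmetric (f := f) (f' := fderiv ℝ f)
    (f'' := fderiv ℝ (fderiv ℝ f) p) (fun y => (hfd y).hasFDerivAt) ((hfd2 p).hasFDerivAt)
  show fderiv ℝ (fun z => fderiv ℝ f z w) p v = fderiv ℝ (fun z => fderiv ℝ f z v) p w
  rw [key w v, key v w, symm]

lemma pdComb (w : ℝ × ℝ × ℝ) {a b c d e : ℝ × ℝ × ℝ → ℝ}
    (ha : ContDiff ℝ (⊤ : ℕ∞) a) (hb : ContDiff ℝ (⊤ : ℕ∞) b) (hc : ContDiff ℝ (⊤ : ℕ∞) c)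
    (hd : ContDiff ℝ (⊤ : ℕ∞) d) (he : ContDiff ℝ (⊤ : ℕ∞) e) (p : ℝ × ℝ × ℝ) :
    pd w (fun z => a z - b z - 3 * (c z) - (3/2) * (d z) - e z) p
      = pd w a p - pd w b p - 3 * pd w c p - (3/2) * pd w d p - pd w e p := by
  have h3c : ContDiff ℝ (⊤ : ℕ∞) (fun z => (3 : ℝ) * c z) := contDiff_const.mul hc
  have h32d : ContDiff ℝ (⊤ : ℕ∞) (fun z => (3/2 : ℝ) * d z) := contDiff_const.mul hd
  have hab : ContDiff ℝ (⊤ : ℕ∞) (fun z => a z - b z) := ha.sub hb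
  have habc : ContDiff ℝ (⊤ : ℕ∞) (fun z => a z - b z - 3 * c z) := hab.sub h3c
  have habcd : ContDiff ℝ (⊤ : ℕ∞) (fun z => a z - b z - 3 * c z - (3/2) * d z) := habc.sub h32d
  rw [pdS w habcd he p, pdS w habc h32d p, pdS w hab h3c p, pdS w ha hb p,
    pdC w 3 hc p, pdC w (3/2) hd p]

theorem key (N : ℕ) (u v : ℝ × ℝ × ℝ → ℝ) (q r : Fin N → ℝ × ℝ × ℝ → ℝ)
    (ψ : ℝ × ℝ × ℝ → ℝ) (φ : Fin N → ℝ × ℝ × ℝ → ℝ)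
    (hu : ContDiff ℝ (⊤ : ℕ∞) u) (hv : ContDiff ℝ (⊤ : ℕ∞) v)
    (hq : ∀ i, ContDiff ℝ (⊤ : ℕ∞) (q i)) (hr : ∀ i, ContDiff ℝ (⊤ : ℕ∞) (r i))
    (hψ : ContDiff ℝ (⊤ : ℕ∞) ψ) (hφ : ∀ i, ContDiff ℝ (⊤ : ℕ∞) (φ i))
    (h1 : ∀ p, pd eX v p = pd eY u p)
    (h2 : ∀ p, 4 * pd eT u p - 12 * u p * pd eX u p - pd eX (pd eX (pd eX u)) p
        - 3 * pd eY v p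
        + 4 * ((∑ i, pd eX (q i) p * r i p) + (∑ i, q i p * pd eX (r i) p)) = 0)
    (h3 : ∀ i, ∀ p, pd eY (q i) p = pd eX (pd eX (q i)) p + 2 * u p * q i p)
    (h5 : ∀ p, pd eY ψ p = pd eX (pd eX ψ) p + 2 * u p * ψ p)
    (h6 : ∀ i, ∀ p, pd eX (φ i) p = r i p * ψ p)
    (h7 : ∀ i, ∀ p, pd eY (φ i) p = r i p * pd eX ψ p - pd eX (r i) p * ψ p)
    (F : ℝ × ℝ × ℝ → ℝ)
    (hF : F = fun z => pd eT ψ z - pd eX (pd eX (pd eX ψ)) z - 3 * (u z * pd eX ψ z)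
        - (3/2) * ((v z + pd eX u z) * ψ z) - ∑ i, q i z * φ i z) :
    ∀ p, pd eY F p = pd eX (pd eX F) p + 2 * u p * F p := by
  -- smoothness facts
  have cψ1 : ContDiff ℝ (⊤ : ℕ∞) (pd eX ψ) := pd_contDiff eX hψ
  have cψ2 : ContDiff ℝ (⊤ : ℕ∞) (pd eX (pd eX ψ)) := pd_contDiff eX cψ1
  have cψ3 : ContDiff ℝ (⊤ : ℕ∞) (pd eX (pd eX (pd eX ψ))) := pd_contDiff eX cψ2
  have cψ4 : ContDiff ℝ (⊤ : ℕ∞) (pd eX (pd eX (pd eX (pd eX ψ)))) := pd_contDiff eX cψ3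
  have cψt : ContDiff ℝ (⊤ : ℕ∞) (pd eT ψ) := pd_contDiff eT hψ
  have cψt1 : ContDiff ℝ (⊤ : ℕ∞) (pd eX (pd eT ψ)) := pd_contDiff eX cψt
  have cu1 : ContDiff ℝ (⊤ : ℕ∞) (pd eX u) := pd_contDiff eX hu
  have cu2 : ContDiff ℝ (⊤ : ℕ∞) (pd eX (pd eX u)) := pd_contDiff eX cu1
  have cv1 : ContDiff ℝ (⊤ : ℕ∞) (pd eX v) := pd_contDiff eX hv
  have cq1 : ∀ i, ContDiff ℝ (⊤ : ℕ∞) (pd eX (q i)) := fun i => pd_contDiff eX (hq i)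
  have cuψ : ContDiff ℝ (⊤ : ℕ∞) (fun z => u z * ψ z) := hu.mul hψ
  have c2uψ : ContDiff ℝ (⊤ : ℕ∞) (fun z => 2 * (u z * ψ z)) := contDiff_const.mul cuψ
  have cuψ1 : ContDiff ℝ (⊤ : ℕ∞) (fun z => u z * pd eX ψ z) := hu.mul cψ1
  have cu1ψ : ContDiff ℝ (⊤ : ℕ∞) (fun z => pd eX u z * ψ z) := cu1.mul hψ
  have cP1 : ContDiff ℝ (⊤ : ℕ∞) (fun z => pd eX u z * ψ z + u z * pd eX ψ z) := cu1ψ.add cuψ1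
  have c2P1 : ContDiff ℝ (⊤ : ℕ∞) (fun z => 2 * (pd eX u z * ψ z + u z * pd eX ψ z)) :=
    contDiff_const.mul cP1
  have cu2ψ : ContDiff ℝ (⊤ : ℕ∞) (fun z => pd eX (pd eX u) z * ψ z) := cu2.mul hψ
  have cu1ψ1 : ContDiff ℝ (⊤ : ℕ∞) (fun z => pd eX u z * pd eX ψ z) := cu1.mul cψ1
  have cuψ2 : ContDiff ℝ (⊤ : ℕ∞) (fun z => u z * pd eX (pd eX ψ) z) := hu.mul cψ2
  have cP2a : ContDiff ℝ (⊤ : ℕ∞) (fun z => pd eX (pd eX u) z * ψ z + pd eX u z * pd eX ψ z) :=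
    cu2ψ.add cu1ψ1
  have cP2b : ContDiff ℝ (⊤ : ℕ∞) (fun z => pd eX u z * pd eX ψ z + u z * pd eX (pd eX ψ) z) :=
    cu1ψ1.add cuψ2
  have cP2 : ContDiff ℝ (⊤ : ℕ∞) (fun z => (pd eX (pd eX u) z * ψ z + pd eX u z * pd eX ψ z)
      + (pd eX u z * pd eX ψ z + u z * pd eX (pd eX ψ) z)) := cP2a.add cP2b
  have c2P2 : ContDiff ℝ (⊤ : ℕ∞) (fun z => 2 * ((pd eX (pd eX u) z * ψ z + pd eX u z * pd eX ψ z)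
      + (pd eX u z * pd eX ψ z + u z * pd eX (pd eX ψ) z))) := contDiff_const.mul cP2
  have cvu : ContDiff ℝ (⊤ : ℕ∞) (fun z => v z + pd eX u z) := hv.add cu1
  have cvuψ : ContDiff ℝ (⊤ : ℕ∞) (fun z => (v z + pd eX u z) * ψ z) := cvu.mul hψ
  have cvu2 : ContDiff ℝ (⊤ : ℕ∞) (fun z => pd eX v z + pd eX (pd eX u) z) := cv1.add cu2
  have cvu2ψ : ContDiff ℝ (⊤ : ℕ∞) (fun z => (pd eX v z + pd eX (pd eX u) z) * ψ z) := cvu2.mul hψ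
  have cvuψ1 : ContDiff ℝ (⊤ : ℕ∞) (fun z => (v z + pd eX u z) * pd eX ψ z) := cvu.mul cψ1
  have cB4 : ContDiff ℝ (⊤ : ℕ∞) (fun z => (pd eX v z + pd eX (pd eX u) z) * ψ z
      + (v z + pd eX u z) * pd eX ψ z) := cvu2ψ.add cvuψ1
  have cqφ : ∀ i, ContDiff ℝ (⊤ : ℕ∞) (fun z => q i z * φ i z) := fun i => (hq i).mul (hφ i)
  have cS : ContDiff ℝ (⊤ : ℕ∞) (fun z => ∑ i, q i z * φ i z) := ContDiff.sum fun i _ => cqφ i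
  have cq1φ : ∀ i, ContDiff ℝ (⊤ : ℕ∞) (fun z => pd eX (q i) z * φ i z) :=
    fun i => (cq1 i).mul (hφ i)
  have crψ : ∀ i, ContDiff ℝ (⊤ : ℕ∞) (fun z => r i z * ψ z) := fun i => (hr i).mul hψ
  have cqrψ : ∀ i, ContDiff ℝ (⊤ : ℕ∞) (fun z => q i z * (r i z * ψ z)) :=
    fun i => (hq i).mul (crψ i)
  have cgi : ∀ i, ContDiff ℝ (⊤ : ℕ∞) (fun z => pd eX (q i) z * φ i z + q i z * (r i z * ψ z)) :=
    fun i => (cq1φ i).add (cqrψ i)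
  have cXS : ContDiff ℝ (⊤ : ℕ∞) (fun z => ∑ i, (pd eX (q i) z * φ i z + q i z * (r i z * ψ z))) :=
    ContDiff.sum fun i _ => cgi i
  -- function-level identities
  have hYψ : pd eY ψ = (fun z => pd eX (pd eX ψ) z + 2 * (u z * ψ z)) :=
    funext fun p => by rw [h5 p]; ring
  have hYuf : pd eY u = pd eX v := funext fun z => (h1 z).symm
  have hG1f : pd eX (fun z => pd eX (pd eX ψ) z + 2 * (u z * ψ z))
      = (fun z => pd eX (pd eX (pd eX ψ)) z + 2 * (pd eX u z * ψ z + u z * pd eX ψ z)) :=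
    funext fun z => by rw [pdA eX cψ2 c2uψ z, pdC eX 2 cuψ z, pdM eX hu hψ z]
  have hG2f : pd eX (fun z => pd eX (pd eX (pd eX ψ)) z
        + 2 * (pd eX u z * ψ z + u z * pd eX ψ z))
      = (fun z => pd eX (pd eX (pd eX (pd eX ψ))) z
        + 2 * ((pd eX (pd eX u) z * ψ z + pd eX u z * pd eX ψ z)
          + (pd eX u z * pd eX ψ z + u z * pd eX (pd eX ψ) z))) :=
    funext fun z => by
      rw [pdA eX cψ3 c2P1 z, pdC eX 2 cP1 z, pdA eX cu1ψ cuψ1 z, pdM eX cu1 hψ z,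
        pdM eX hu cψ1 z]
  have hTXX : pd eT (pd eX (pd eX ψ)) = pd eX (pd eX (pd eT ψ)) := by
    rw [pd_comm eT eX cψ1, pd_comm eT eX hψ]
  have hXSsum : ∀ p, (∑ i, pd eX (fun z => q i z * φ i z) p)
      = ∑ i, (pd eX (q i) p * φ i p + q i p * (r i p * ψ p)) := fun p =>
    Finset.sum_congr rfl fun i _ => by rw [pdM eX (hq i) (hφ i) p, h6 i p]
  have hXF : pd eX (fun z => pd eT ψ z - pd eX (pd eX (pd eX ψ)) z - 3 * (u z * pd eX ψ z)
        - (3/2) * ((v z + pd eX u z) * ψ z) - ∑ i, q i z * φ i z)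
      = (fun z => pd eX (pd eT ψ) z - pd eX (pd eX (pd eX (pd eX ψ))) z
        - 3 * (pd eX u z * pd eX ψ z + u z * pd eX (pd eX ψ) z)
        - (3/2) * ((pd eX v z + pd eX (pd eX u) z) * ψ z + (v z + pd eX u z) * pd eX ψ z)
        - ∑ i, (pd eX (q i) z * φ i z + q i z * (r i z * ψ z))) :=
    funext fun z => by
      rw [pdComb eX cψt cψ3 cuψ1 cvuψ cS z, pdM eX hu cψ1 z, pdM eX cvu hψ z,
        pdA eX hv cu1 z, pdSum Finset.univ eX (fun i _ => cqφ i) z, hXSsum z]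
  -- pointwise work
  intro p
  have hFp : F p = pd eT ψ p - pd eX (pd eX (pd eX ψ)) p - 3 * (u p * pd eX ψ p)
      - (3/2) * ((v p + pd eX u p) * ψ p) - ∑ i, q i p * φ i p := by rw [hF]
  have ha : pd eY (pd eT ψ) p = pd eX (pd eX (pd eT ψ)) p
      + 2 * (pd eT u p * ψ p + u p * pd eT ψ p) := by
    rw [pd_comm eY eT hψ, hYψ, pdA eT cψ2 c2uψ p, pdC eT 2 cuψ p, pdM eT hu hψ p, hTXX]
  have hb : pd eY (pd eX (pd eX (pd eX ψ))) p
      = pd eX (pd eX (pd eX (pd eX (pd eX ψ)))) p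
        + 2 * (((pd eX (pd eX (pd eX u)) p * ψ p + pd eX (pd eX u) p * pd eX ψ p)
            + (pd eX (pd eX u) p * pd eX ψ p + pd eX u p * pd eX (pd eX ψ) p))
          + ((pd eX (pd eX u) p * pd eX ψ p + pd eX u p * pd eX (pd eX ψ) p)
            + (pd eX u p * pd eX (pd eX ψ) p + u p * pd eX (pd eX (pd eX ψ)) p))) := by
    rw [pd_comm eY eX cψ2, pd_comm eY eX cψ1, pd_comm eY eX hψ, hYψ, hG1f, hG2f,
      pdA eX cψ4 c2P2 p, pdC eX 2 cP2 p, pdA eX cP2a cP2b p, pdA eX cu2ψ cu1ψ1 p,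
      pdA eX cu1ψ1 cuψ2 p, pdM eX cu2 hψ p, pdM eX cu1 cψ1 p, pdM eX hu cψ2 p]
  have hc : pd eY (fun z => u z * pd eX ψ z) p
      = pd eX v p * pd eX ψ p + u p * (pd eX (pd eX (pd eX ψ)) p
        + 2 * (pd eX u p * ψ p + u p * pd eX ψ p)) := by
    rw [pdM eY hu cψ1 p, ← h1 p, pd_comm eY eX hψ, hYψ, hG1f]
  have hd : pd eY (fun z => (v z + pd eX u z) * ψ z) p
      = (pd eY v p + pd eX (pd eX v) p) * ψ p
        + (v p + pd eX u p) * (pd eX (pd eX ψ) p + 2 * u p * ψ p) := by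
    rw [pdM eY cvu hψ p, pdA eY hv cu1 p, h5 p, pd_comm eY eX hu, hYuf]
  have hYSsum : (∑ i, pd eY (fun z => q i z * φ i z) p)
      = ∑ i, ((pd eX (pd eX (q i)) p + 2 * u p * q i p) * φ i p
        + q i p * (r i p * pd eX ψ p - pd eX (r i) p * ψ p)) :=
    Finset.sum_congr rfl fun i _ => by rw [pdM eY (hq i) (hφ i) p, h3 i p, h7 i p]
  have hesplit : (∑ i, ((pd eX (pd eX (q i)) p + 2 * u p * q i p) * φ i p
        + q i p * (r i p * pd eX ψ p - pd eX (r i) p * ψ p)))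
      = (∑ i, pd eX (pd eX (q i)) p * φ i p) + 2 * u p * (∑ i, q i p * φ i p)
        + pd eX ψ p * (∑ i, q i p * r i p) - ψ p * (∑ i, q i p * pd eX (r i) p) := by
    rw [Finset.mul_sum, Finset.mul_sum, Finset.mul_sum, ← Finset.sum_add_distrib,
      ← Finset.sum_add_distrib, ← Finset.sum_sub_distrib]
    exact Finset.sum_congr rfl fun i _ => by ring
  have hXXSsum : (∑ i, pd eX (fun z => pd eX (q i) z * φ i z + q i z * (r i z * ψ z)) p)
      = ∑ i, ((pd eX (pd eX (q i)) p * φ i p + pd eX (q i) p * (r i p * ψ p))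
        + (pd eX (q i) p * (r i p * ψ p)
          + q i p * (pd eX (r i) p * ψ p + r i p * pd eX ψ p))) :=
    Finset.sum_congr rfl fun i _ => by
      rw [pdA eX (cq1φ i) (cqrψ i) p, pdM eX (cq1 i) (hφ i) p, h6 i p,
        pdM eX (hq i) (crψ i) p, pdM eX (hr i) hψ p]
  have hxsplit : (∑ i, ((pd eX (pd eX (q i)) p * φ i p + pd eX (q i) p * (r i p * ψ p))
        + (pd eX (q i) p * (r i p * ψ p)
          + q i p * (pd eX (r i) p * ψ p + r i p * pd eX ψ p))))
      = (∑ i, pd eX (pd eX (q i)) p * φ i p) + 2 * ψ p * (∑ i, pd eX (q i) p * r i p)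
        + ψ p * (∑ i, q i p * pd eX (r i) p) + pd eX ψ p * (∑ i, q i p * r i p) := by
    rw [Finset.mul_sum, Finset.mul_sum, Finset.mul_sum, ← Finset.sum_add_distrib,
      ← Finset.sum_add_distrib, ← Finset.sum_add_distrib]
    exact Finset.sum_congr rfl fun i _ => by ring
  rw [hFp, hF, hXF, pdComb eY cψt cψ3 cuψ1 cvuψ cS p, pdComb eX cψt1 cψ4 cP2b cB4 cXS p,
    ha, hb, hc, hd, pdSum Finset.univ eY (fun i _ => cqφ i) p, hYSsum, hesplit,
    pdA eX cu1ψ1 cuψ2 p, pdM eX cu1 cψ1 p, pdM eX hu cψ2 p,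
    pdA eX cvu2ψ cvuψ1 p, pdM eX cvu2 hψ p, pdA eX cv1 cu2 p, pdM eX cvu cψ1 p,
    pdA eX hv cu1 p, pdSum Finset.univ eX (fun i _ => cgi i) p, hXXSsum, hxsplit]
  linear_combination (ψ p / 2) * h2 p

/-- compatibility of the Lax pair of the first type of KP equation with
self-consistent sources: the residual `χ` of the `t`-flow satisfies the `y`-equation. -/
theorem stmt_3 (N : ℕ) (hN : 0 < N)
    (u v : ℝ × ℝ × ℝ → ℝ) (q r : Fin N → ℝ × ℝ × ℝ → ℝ)
    (ψ : ℝ × ℝ × ℝ → ℝ) (φ : Fin N → ℝ × ℝ × ℝ → ℝ)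
    (hu : ContDiff ℝ (⊤ : ℕ∞) u) (hv : ContDiff ℝ (⊤ : ℕ∞) v)
    (hq : ∀ i, ContDiff ℝ (⊤ : ℕ∞) (q i)) (hr : ∀ i, ContDiff ℝ (⊤ : ℕ∞) (r i))
    (hψ : ContDiff ℝ (⊤ : ℕ∞) ψ) (hφ : ∀ i, ContDiff ℝ (⊤ : ℕ∞) (φ i))
    (h1 : ∀ p, pX v p = pY u p)
    (h2 : ∀ p, 4 * pT u p - 12 * u p * pX u p - pX (pX (pX u)) p - 3 * pY v p
        + 4 * ∑ i, pX (fun z => q i z * r i z) p = 0)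
    (h3 : ∀ i, ∀ p, pY (q i) p = pX (pX (q i)) p + 2 * u p * q i p)
    (h4 : ∀ i, ∀ p, pY (r i) p = -(pX (pX (r i)) p) - 2 * u p * r i p)
    (h5 : ∀ p, pY ψ p = pX (pX ψ) p + 2 * u p * ψ p)
    (h6 : ∀ i, ∀ p, pX (φ i) p = r i p * ψ p)
    (h7 : ∀ i, ∀ p, pY (φ i) p = r i p * pX ψ p - pX (r i) p * ψ p)
    (χ : ℝ × ℝ × ℝ → ℝ)
    (hχ : ∀ p, χ p = pT ψ p - pX (pX (pX ψ)) p - 3 * u p * pX ψ p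
        - (3/2) * (v p + pX u p) * ψ p - ∑ i, q i p * φ i p) :
    ∀ p, pY χ p = pX (pX χ) p + 2 * u p * χ p := by
  have du : Differentiable ℝ u := hu.differentiable (by simp)
  have dv : Differentiable ℝ v := hv.differentiable (by simp)
  have dψ : Differentiable ℝ ψ := hψ.differentiable (by simp)
  have dq : ∀ i, Differentiable ℝ (q i) := fun i => (hq i).differentiable (by simp)
  have dr : ∀ i, Differentiable ℝ (r i) := fun i => (hr i).differentiable (by simp)
  have dφ : ∀ i, Differentiable ℝ (φ i) := fun i => (hφ i).differentiable (by simp)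
  have du1 : Differentiable ℝ (pd eX u) := (pd_contDiff eX hu).differentiable (by simp)
  have du2 : Differentiable ℝ (pd eX (pd eX u)) :=
    (pd_contDiff eX (pd_contDiff eX hu)).differentiable (by simp)
  have dψ1 : Differentiable ℝ (pd eX ψ) := (pd_contDiff eX hψ).differentiable (by simp)
  have dψ2 : Differentiable ℝ (pd eX (pd eX ψ)) :=
    (pd_contDiff eX (pd_contDiff eX hψ)).differentiable (by simp)
  have dq1 : ∀ i, Differentiable ℝ (pd eX (q i)) :=
    fun i => (pd_contDiff eX (hq i)).differentiable (by simp)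
  -- converted hypotheses
  have h1' : ∀ p, pd eX v p = pd eY u p := fun p => by
    rw [← pX_eq_pd dv, ← pY_eq_pd du]; exact h1 p
  have hsum : ∀ p, (∑ i, pX (fun z => q i z * r i z) p)
      = (∑ i, pd eX (q i) p * r i p) + (∑ i, q i p * pd eX (r i) p) := by
    intro p
    rw [← Finset.sum_add_distrib]
    exact Finset.sum_congr rfl fun i _ => by
      rw [pX_eq_pd ((dq i).fun_mul (dr i)), pdM eX (hq i) (hr i) p]
  have h2' : ∀ p, 4 * pd eT u p - 12 * u p * pd eX u p - pd eX (pd eX (pd eX u)) p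
      - 3 * pd eY v p
      + 4 * ((∑ i, pd eX (q i) p * r i p) + (∑ i, q i p * pd eX (r i) p)) = 0 := by
    intro p
    have h := h2 p
    rw [pT_eq_pd du, pY_eq_pd dv, pX_eq_pd du, pX_eq_pd du1, pX_eq_pd du2, hsum p] at h
    exact h
  have h3' : ∀ i, ∀ p, pd eY (q i) p = pd eX (pd eX (q i)) p + 2 * u p * q i p := by
    intro i p
    rw [← pY_eq_pd (dq i), ← pX_eq_pd (dq1 i), ← pX_eq_pd (dq i)]
    exact h3 i p
  have h5' : ∀ p, pd eY ψ p = pd eX (pd eX ψ) p + 2 * u p * ψ p := by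
    intro p
    rw [← pY_eq_pd dψ, ← pX_eq_pd dψ1, ← pX_eq_pd dψ]
    exact h5 p
  have h6' : ∀ i, ∀ p, pd eX (φ i) p = r i p * ψ p := fun i p => by
    rw [← pX_eq_pd (dφ i)]; exact h6 i p
  have h7' : ∀ i, ∀ p, pd eY (φ i) p = r i p * pd eX ψ p - pd eX (r i) p * ψ p := fun i p => by
    rw [← pY_eq_pd (dφ i), ← pX_eq_pd dψ, ← pX_eq_pd (dr i)]; exact h7 i p
  have hχf : χ = (fun z => pd eT ψ z - pd eX (pd eX (pd eX ψ)) z - 3 * (u z * pd eX ψ z)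
      - (3/2) * ((v z + pd eX u z) * ψ z) - ∑ i, q i z * φ i z) := by
    refine funext fun p => ?_
    show χ p = pd eT ψ p - pd eX (pd eX (pd eX ψ)) p - 3 * (u p * pd eX ψ p)
      - (3/2) * ((v p + pd eX u p) * ψ p) - ∑ i, q i p * φ i p
    rw [hχ p, pT_eq_pd dψ, pX_eq_pd dψ, pX_eq_pd dψ1, pX_eq_pd dψ2, pX_eq_pd du]
    ring
  have cχ : ContDiff ℝ (⊤ : ℕ∞) χ := by
    rw [hχf]
    exact ((((pd_contDiff eT hψ).sub
      (pd_contDiff eX (pd_contDiff eX (pd_contDiff eX hψ)))).sub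
      (contDiff_const.mul (hu.mul (pd_contDiff eX hψ)))).sub
      (contDiff_const.mul ((hv.add (pd_contDiff eX hu)).mul hψ))).sub
      (ContDiff.sum fun i _ => (hq i).mul (hφ i))
  have dχ : Differentiable ℝ χ := cχ.differentiable (by simp)
  have dχ1 : Differentiable ℝ (pd eX χ) := (pd_contDiff eX cχ).differentiable (by simp)
  intro p
  rw [pY_eq_pd dχ, pX_eq_pd dχ, pX_eq_pd dχ1]
  exact key N u v q r ψ φ hu hv hq hr hψ hφ h1' h2' h3' h5' h6' h7' χ hχf p
end

section
/- Let N be a positive integer and let u, w, q_1,…,q_N, r_1,…,r_N, ψ, φ_1,…,φ_N : ℝ³ → ℝ be smooth functions of (x,y,t). Assume: (i) w_x = u_y; (ii) 4 u_t − 12 u u_x − u_{xxx} − 3 w_y = 3 ∑_{i=1}^N [q_{i,xx} r_i − q_i r_{i,xx} + (q_i r_i)_y]; (iii) q_{i,t} = q_{i,xxx} + 3 u q_{i,x} + (3/2) q_i w + (3/2) q_i ∑_{j=1}^N q_j r_j + (3/2) u_x q_i and r_{i,t} = r_{i,xxx} + 3 u r_{i,x} − (3/2) r_i w − (3/2) r_i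 ∑_{j=1}^N q_j r_j + (3/2) u_x r_i; (iv) ψ_t = ψ_{xxx} + 3 u ψ_x + (3/2)(w + u_x + ∑_{j=1}^N q_j r_j) ψ; (v) φ_{i,x} = r_i ψ and φ_{i,t} = r_{i,xx} ψ − r_{i,x} ψ_x + r_i ψ_{xx} + 3 u r_i ψ for i = 1,…,N. Define χ := ψ_y − ψ_{xx} − 2 u ψ − ∑_{i=1}^N q_i φ_i. Then χ_t = χ_{xxx} + 3 u χ_x + (3/2)(w + u_x + ∑_{j=1}^N q_j r_j) χ. (This is the content of the Lax representation ψ_y = (∂² + 2u + ∑ q_i ∂^{-1} r_i)ψ, ψ_t = (∂³ + 3u∂ + (3/2)D^{-1}u_y + (3/2)u_x + (3/2)∑ q_j r_j)ψ for the second type of KP equation with self-consistent sources.) -/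
namespace KP

variable {f g : ℝ × ℝ × ℝ → ℝ}

lemma sliceX (hf : ContDiff ℝ (⊤ : ℕ∞) f) (y t : ℝ) : Differentiable ℝ (fun s => f (s, y, t)) :=
  (by fun_prop : ContDiff ℝ (⊤ : ℕ∞) (fun s => f (s, y, t))).differentiable (by simp)
lemma sliceY (hf : ContDiff ℝ (⊤ : ℕ∞) f) (x t : ℝ) : Differentiable ℝ (fun s => f (x, s, t)) :=
  (by fun_prop : ContDiff ℝ (⊤ : ℕ∞) (fun s => f (x, s, t))).differentiable (by simp)
lemma sliceT (hf : ContDiff ℝ (⊤ : ℕ∞) f) (x y : ℝ) : Differentiable ℝ (fun s => f (x, y, s)) :=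
  (by fun_prop : ContDiff ℝ (⊤ : ℕ∞) (fun s => f (x, y, s))).differentiable (by simp)

lemma hasDerivX (hf : ContDiff ℝ (⊤ : ℕ∞) f) (p : ℝ × ℝ × ℝ) :
    HasDerivAt (fun s => f (s, p.2.1, p.2.2)) (fderiv ℝ f p ((1:ℝ), (0:ℝ), (0:ℝ))) p.1 := by
  have h1 : HasDerivAt (fun s : ℝ => (s, p.2.1, p.2.2)) ((1:ℝ), (0:ℝ), (0:ℝ)) p.1 := by
    exact (hasDerivAt_id p.1).prodMk (hasDerivAt_const p.1 (p.2.1, p.2.2))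
  have h2 := (hf.differentiable (by simp) p).hasFDerivAt
  exact h2.comp_hasDerivAt p.1 h1

lemma hasDerivY (hf : ContDiff ℝ (⊤ : ℕ∞) f) (p : ℝ × ℝ × ℝ) :
    HasDerivAt (fun s => f (p.1, s, p.2.2)) (fderiv ℝ f p ((0:ℝ), (1:ℝ), (0:ℝ))) p.2.1 := by
  have h1 : HasDerivAt (fun s : ℝ => (p.1, s, p.2.2)) ((0:ℝ), (1:ℝ), (0:ℝ)) p.2.1 := by
    exact (hasDerivAt_const p.2.1 p.1).prodMk
      ((hasDerivAt_id p.2.1).prodMk (hasDerivAt_const p.2.1 p.2.2))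
  have h2 := (hf.differentiable (by simp) p).hasFDerivAt
  exact h2.comp_hasDerivAt p.2.1 h1

lemma hasDerivT (hf : ContDiff ℝ (⊤ : ℕ∞) f) (p : ℝ × ℝ × ℝ) :
    HasDerivAt (fun s => f (p.1, p.2.1, s)) (fderiv ℝ f p ((0:ℝ), (0:ℝ), (1:ℝ))) p.2.2 := by
  have h1 : HasDerivAt (fun s : ℝ => (p.1, p.2.1, s)) ((0:ℝ), (0:ℝ), (1:ℝ)) p.2.2 := by
    exact (hasDerivAt_const p.2.2 p.1).prodMk
      ((hasDerivAt_const p.2.2 p.2.1).prodMk (hasDerivAt_id p.2.2))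
  have h2 := (hf.differentiable (by simp) p).hasFDerivAt
  exact h2.comp_hasDerivAt p.2.2 h1

lemma pX_eq (hf : ContDiff ℝ (⊤ : ℕ∞) f) (p : ℝ × ℝ × ℝ) :
    pX f p = fderiv ℝ f p ((1:ℝ), (0:ℝ), (0:ℝ)) := (hasDerivX hf p).deriv
lemma pY_eq (hf : ContDiff ℝ (⊤ : ℕ∞) f) (p : ℝ × ℝ × ℝ) :
    pY f p = fderiv ℝ f p ((0:ℝ), (1:ℝ), (0:ℝ)) := (hasDerivY hf p).deriv
lemma pT_eq (hf : ContDiff ℝ (⊤ : ℕ∞) f) (p : ℝ × ℝ × ℝ) :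
    pT f p = fderiv ℝ f p ((0:ℝ), (0:ℝ), (1:ℝ)) := (hasDerivT hf p).deriv

@[fun_prop] lemma contDiff_pX (hf : ContDiff ℝ (⊤ : ℕ∞) f) : ContDiff ℝ (⊤ : ℕ∞) (pX f) := by
  rw [show pX f = fun p => fderiv ℝ f p ((1:ℝ), (0:ℝ), (0:ℝ)) from funext (pX_eq hf)]
  exact (hf.fderiv_right (by simp)).clm_apply contDiff_const
@[fun_prop] lemma contDiff_pY (hf : ContDiff ℝ (⊤ : ℕ∞) f) : ContDiff ℝ (⊤ : ℕ∞) (pY f) := by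
  rw [show pY f = fun p => fderiv ℝ f p ((0:ℝ), (1:ℝ), (0:ℝ)) from funext (pY_eq hf)]
  exact (hf.fderiv_right (by simp)).clm_apply contDiff_const
@[fun_prop] lemma contDiff_pT (hf : ContDiff ℝ (⊤ : ℕ∞) f) : ContDiff ℝ (⊤ : ℕ∞) (pT f) := by
  rw [show pT f = fun p => fderiv ℝ f p ((0:ℝ), (0:ℝ), (1:ℝ)) from funext (pT_eq hf)]
  exact (hf.fderiv_right (by simp)).clm_apply contDiff_const

@[fun_prop] lemma contDiff_fin_sum {N : ℕ} (F : Fin N → ℝ × ℝ × ℝ → ℝ)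
    (hF : ∀ i, ContDiff ℝ (⊤ : ℕ∞) (F i)) : ContDiff ℝ (⊤ : ℕ∞) (fun p => ∑ i, F i p) :=
  ContDiff.sum fun i _ => hF i

lemma comm_aux (hf : ContDiff ℝ (⊤ : ℕ∞) f) (v w : ℝ × ℝ × ℝ) (p : ℝ × ℝ × ℝ) :
    fderiv ℝ (fun z => fderiv ℝ f z v) p w = fderiv ℝ (fun z => fderiv ℝ f z w) p v := by
  have hd : Differentiable ℝ (fderiv ℝ f) := (hf.fderiv_right (m := (⊤ : ℕ∞)) (by simp)).differentiable (by simp)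
  have hsym := second_derivative_symmetric
    (fun z => (hf.differentiable (by simp) z).hasFDerivAt) (hd p).hasFDerivAt
  have e1 : ∀ v : ℝ × ℝ × ℝ, fderiv ℝ (fun z => fderiv ℝ f z v) p
      = (fderiv ℝ (fderiv ℝ f) p).flip v := by
    intro v
    simpa using fderiv_clm_apply (c := fderiv ℝ f) (u := fun _ => v) (hd p)
      (differentiableAt_const v)
  rw [e1, e1]
  exact hsym w v

lemma comm_YX (hf : ContDiff ℝ (⊤ : ℕ∞) f) : pY (pX f) = pX (pY f) := by
  funext p
  have e1 : pX f = fun z => fderiv ℝ f z ((1:ℝ),(0:ℝ),(0:ℝ)) := funext (pX_eq hf)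
  have e2 : pY f = fun z => fderiv ℝ f z ((0:ℝ),(1:ℝ),(0:ℝ)) := funext (pY_eq hf)
  rw [pY_eq (by rw [e1]; exact (hf.fderiv_right (by simp)).clm_apply contDiff_const) p,
      pX_eq (by rw [e2]; exact (hf.fderiv_right (by simp)).clm_apply contDiff_const) p, e1, e2]
  exact comm_aux hf _ _ p

lemma comm_TX (hf : ContDiff ℝ (⊤ : ℕ∞) f) : pT (pX f) = pX (pT f) := by
  funext p
  have e1 : pX f = fun z => fderiv ℝ f z ((1:ℝ),(0:ℝ),(0:ℝ)) := funext (pX_eq hf)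
  have e2 : pT f = fun z => fderiv ℝ f z ((0:ℝ),(0:ℝ),(1:ℝ)) := funext (pT_eq hf)
  rw [pT_eq (by rw [e1]; exact (hf.fderiv_right (by simp)).clm_apply contDiff_const) p,
      pX_eq (by rw [e2]; exact (hf.fderiv_right (by simp)).clm_apply contDiff_const) p, e1, e2]
  exact comm_aux hf _ _ p

lemma comm_TY (hf : ContDiff ℝ (⊤ : ℕ∞) f) : pT (pY f) = pY (pT f) := by
  funext p
  have e1 : pY f = fun z => fderiv ℝ f z ((0:ℝ),(1:ℝ),(0:ℝ)) := funext (pY_eq hf)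
  have e2 : pT f = fun z => fderiv ℝ f z ((0:ℝ),(0:ℝ),(1:ℝ)) := funext (pT_eq hf)
  rw [pT_eq (by rw [e1]; exact (hf.fderiv_right (by simp)).clm_apply contDiff_const) p,
      pY_eq (by rw [e2]; exact (hf.fderiv_right (by simp)).clm_apply contDiff_const) p, e1, e2]
  exact comm_aux hf _ _ p

-- distribution rules, X
lemma pX_add (hf : ContDiff ℝ (⊤ : ℕ∞) f) (hg : ContDiff ℝ (⊤ : ℕ∞) g) :
    pX (fun p => f p + g p) = fun p => pX f p + pX g p := by
  funext p; exact deriv_add ((sliceX hf p.2.1 p.2.2) p.1) ((sliceX hg p.2.1 p.2.2) p.1)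
lemma pX_sub (hf : ContDiff ℝ (⊤ : ℕ∞) f) (hg : ContDiff ℝ (⊤ : ℕ∞) g) :
    pX (fun p => f p - g p) = fun p => pX f p - pX g p := by
  funext p; exact deriv_sub ((sliceX hf p.2.1 p.2.2) p.1) ((sliceX hg p.2.1 p.2.2) p.1)
lemma pX_mul (hf : ContDiff ℝ (⊤ : ℕ∞) f) (hg : ContDiff ℝ (⊤ : ℕ∞) g) :
    pX (fun p => f p * g p) = fun p => pX f p * g p + f p * pX g p := by
  funext p; exact deriv_mul ((sliceX hf p.2.1 p.2.2) p.1) ((sliceX hg p.2.1 p.2.2) p.1)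
lemma pX_const (c : ℝ) : pX (fun _ => c) = fun _ => 0 := by
  funext p; exact deriv_const p.1 c
lemma pX_const_mul (c : ℝ) (hf : ContDiff ℝ (⊤ : ℕ∞) f) :
    pX (fun p => c * f p) = fun p => c * pX f p := by
  funext p; exact deriv_const_mul c ((sliceX hf p.2.1 p.2.2) p.1)
lemma pX_sum {N : ℕ} (F : Fin N → ℝ × ℝ × ℝ → ℝ) (hF : ∀ i, ContDiff ℝ (⊤ : ℕ∞) (F i)) :
    pX (fun p => ∑ i, F i p) = fun p => ∑ i, pX (F i) p := by
  funext p; exact deriv_fun_sum (fun i _ => (sliceX (hF i) p.2.1 p.2.2) p.1)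

-- Y
lemma pY_add (hf : ContDiff ℝ (⊤ : ℕ∞) f) (hg : ContDiff ℝ (⊤ : ℕ∞) g) :
    pY (fun p => f p + g p) = fun p => pY f p + pY g p := by
  funext p; exact deriv_add ((sliceY hf p.1 p.2.2) p.2.1) ((sliceY hg p.1 p.2.2) p.2.1)
lemma pY_sub (hf : ContDiff ℝ (⊤ : ℕ∞) f) (hg : ContDiff ℝ (⊤ : ℕ∞) g) :
    pY (fun p => f p - g p) = fun p => pY f p - pY g p := by
  funext p; exact deriv_sub ((sliceY hf p.1 p.2.2) p.2.1) ((sliceY hg p.1 p.2.2) p.2.1)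
lemma pY_mul (hf : ContDiff ℝ (⊤ : ℕ∞) f) (hg : ContDiff ℝ (⊤ : ℕ∞) g) :
    pY (fun p => f p * g p) = fun p => pY f p * g p + f p * pY g p := by
  funext p; exact deriv_mul ((sliceY hf p.1 p.2.2) p.2.1) ((sliceY hg p.1 p.2.2) p.2.1)
lemma pY_const (c : ℝ) : pY (fun _ => c) = fun _ => 0 := by
  funext p; exact deriv_const p.2.1 c
lemma pY_const_mul (c : ℝ) (hf : ContDiff ℝ (⊤ : ℕ∞) f) :
    pY (fun p => c * f p) = fun p => c * pY f p := by
  funext p; exact deriv_const_mul c ((sliceY hf p.1 p.2.2) p.2.1)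
lemma pY_sum {N : ℕ} (F : Fin N → ℝ × ℝ × ℝ → ℝ) (hF : ∀ i, ContDiff ℝ (⊤ : ℕ∞) (F i)) :
    pY (fun p => ∑ i, F i p) = fun p => ∑ i, pY (F i) p := by
  funext p; exact deriv_fun_sum (fun i _ => (sliceY (hF i) p.1 p.2.2) p.2.1)

-- T
lemma pT_add (hf : ContDiff ℝ (⊤ : ℕ∞) f) (hg : ContDiff ℝ (⊤ : ℕ∞) g) :
    pT (fun p => f p + g p) = fun p => pT f p + pT g p := by
  funext p; exact deriv_add ((sliceT hf p.1 p.2.1) p.2.2) ((sliceT hg p.1 p.2.1) p.2.2)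
lemma pT_sub (hf : ContDiff ℝ (⊤ : ℕ∞) f) (hg : ContDiff ℝ (⊤ : ℕ∞) g) :
    pT (fun p => f p - g p) = fun p => pT f p - pT g p := by
  funext p; exact deriv_sub ((sliceT hf p.1 p.2.1) p.2.2) ((sliceT hg p.1 p.2.1) p.2.2)
lemma pT_mul (hf : ContDiff ℝ (⊤ : ℕ∞) f) (hg : ContDiff ℝ (⊤ : ℕ∞) g) :
    pT (fun p => f p * g p) = fun p => pT f p * g p + f p * pT g p := by
  funext p; exact deriv_mul ((sliceT hf p.1 p.2.1) p.2.2) ((sliceT hg p.1 p.2.1) p.2.2)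
lemma pT_const (c : ℝ) : pT (fun _ => c) = fun _ => 0 := by
  funext p; exact deriv_const p.2.2 c
lemma pT_const_mul (c : ℝ) (hf : ContDiff ℝ (⊤ : ℕ∞) f) :
    pT (fun p => c * f p) = fun p => c * pT f p := by
  funext p; exact deriv_const_mul c ((sliceT hf p.1 p.2.1) p.2.2)
lemma pT_sum {N : ℕ} (F : Fin N → ℝ × ℝ × ℝ → ℝ) (hF : ∀ i, ContDiff ℝ (⊤ : ℕ∞) (F i)) :
    pT (fun p => ∑ i, F i p) = fun p => ∑ i, pT (F i) p := by
  funext p; exact deriv_fun_sum (fun i _ => (sliceT (hF i) p.1 p.2.1) p.2.2)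

end KP

/-- compatibility of the Lax pair of the second type of KP equation with
self-consistent sources: the residual `χ` of the `y`-equation satisfies the `t`-flow. -/
theorem stmt_5 (N : ℕ) (hN : 0 < N)
    (u w : ℝ × ℝ × ℝ → ℝ) (q r : Fin N → ℝ × ℝ × ℝ → ℝ)
    (ψ : ℝ × ℝ × ℝ → ℝ) (φ : Fin N → ℝ × ℝ × ℝ → ℝ)
    (hu : ContDiff ℝ (⊤ : ℕ∞) u) (hw : ContDiff ℝ (⊤ : ℕ∞) w)
    (hq : ∀ i, ContDiff ℝ (⊤ : ℕ∞) (q i)) (hr : ∀ i, ContDiff ℝ (⊤ : ℕ∞) (r i))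
    (hψ : ContDiff ℝ (⊤ : ℕ∞) ψ) (hφ : ∀ i, ContDiff ℝ (⊤ : ℕ∞) (φ i))
    (h1 : ∀ p, pX w p = pY u p)
    (h2 : ∀ p, 4 * pT u p - 12 * u p * pX u p - pX (pX (pX u)) p - 3 * pY w p
        = 3 * ∑ i, (pX (pX (q i)) p * r i p - q i p * pX (pX (r i)) p
            + pY (fun z => q i z * r i z) p))
    (h3 : ∀ i, ∀ p, pT (q i) p = pX (pX (pX (q i))) p + 3 * u p * pX (q i) p
        + (3/2) * q i p * w p + (3/2) * q i p * ∑ j, q j p * r j p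
        + (3/2) * pX u p * q i p)
    (h4 : ∀ i, ∀ p, pT (r i) p = pX (pX (pX (r i))) p + 3 * u p * pX (r i) p
        - (3/2) * r i p * w p - (3/2) * r i p * ∑ j, q j p * r j p
        + (3/2) * pX u p * r i p)
    (h5 : ∀ p, pT ψ p = pX (pX (pX ψ)) p + 3 * u p * pX ψ p
        + (3/2) * (w p + pX u p + ∑ j, q j p * r j p) * ψ p)
    (h6 : ∀ i, ∀ p, pX (φ i) p = r i p * ψ p)
    (h7 : ∀ i, ∀ p, pT (φ i) p = pX (pX (r i)) p * ψ p - pX (r i) p * pX ψ p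
        + r i p * pX (pX ψ) p + 3 * u p * r i p * ψ p)
    (χ : ℝ × ℝ × ℝ → ℝ)
    (hχ : ∀ p, χ p = pY ψ p - pX (pX ψ) p - 2 * u p * ψ p - ∑ i, q i p * φ i p) :
    ∀ p, pT χ p = pX (pX (pX χ)) p + 3 * u p * pX χ p
      + (3/2) * (w p + pX u p + ∑ j, q j p * r j p) * χ p := by
  have hfac : ∀ (F G : Fin N → ℝ) (c : ℝ),
      (∑ i, F i * (G i * c)) = (∑ i, F i * G i) * c := by
    intro F G c; rw [Finset.sum_mul]; exact Finset.sum_congr rfl fun i _ => by ring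
  have H1 : pX w = pY u := funext h1
  have H5 : pT ψ = fun p => pX (pX (pX ψ)) p + 3 * u p * pX ψ p
      + (3/2) * (w p + pX u p + ∑ j, q j p * r j p) * ψ p := funext h5
  have H6 : ∀ i, pX (φ i) = fun p => r i p * ψ p := fun i => funext (h6 i)
  have HU : pT u = fun p => 3*u p*pX u p + (1/4)*pX (pX (pX u)) p + (3/4)*pY w p
      + (3/4)*(∑ i, pX (pX (q i)) p * r i p) - (3/4)*(∑ i, q i p * pX (pX (r i)) p)
      + (3/4)*(∑ i, pY (q i) p * r i p) + (3/4)*(∑ i, q i p * pY (r i) p) := by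
    funext p
    have h := h2 p
    simp (disch := fun_prop) only [KP.pY_mul] at h
    simp only [Finset.sum_add_distrib, Finset.sum_sub_distrib] at h
    linarith
  have Hχ : χ = fun p => pY ψ p - pX (pX ψ) p - 2 * u p * ψ p - ∑ i, q i p * φ i p :=
    funext hχ
  subst Hχ
  -- first x-derivative of χ
  have HC1 : pX (fun p => pY ψ p - pX (pX ψ) p - 2 * u p * ψ p - ∑ i, q i p * φ i p)
      = fun p => pX (pY ψ) p - pX (pX (pX ψ)) p - 2 * pX u p * ψ p - 2 * u p * pX ψ p
        - (∑ i, pX (q i) p * φ i p) - (∑ i, q i p * r i p) * ψ p := by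
    funext p
    simp (disch := fun_prop) only [KP.pX_add, KP.pX_sub, KP.pX_mul, KP.pX_const_mul,
      KP.pX_const, KP.pX_sum, H6, H1, hfac, Finset.sum_add_distrib, Finset.sum_sub_distrib,
      ← Finset.sum_mul]
    ring
  -- second x-derivative
  have HC2 : pX (pX (fun p => pY ψ p - pX (pX ψ) p - 2 * u p * ψ p - ∑ i, q i p * φ i p))
      = fun p => pX (pX (pY ψ)) p - pX (pX (pX (pX ψ))) p
        - 2 * pX (pX u) p * ψ p - (2 * (∑ i, pX (q i) p * r i p) + (∑ i, q i p * pX (r i) p)) * ψ p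
        - (4 * pX u p + (∑ i, q i p * r i p)) * pX ψ p
        - 2 * u p * pX (pX ψ) p - (∑ i, pX (pX (q i)) p * φ i p) := by
    rw [HC1]
    funext p
    simp (disch := fun_prop) only [KP.pX_add, KP.pX_sub, KP.pX_mul, KP.pX_const_mul,
      KP.pX_const, KP.pX_sum, H6, H1, hfac, Finset.sum_add_distrib, Finset.sum_sub_distrib,
      ← Finset.sum_mul]
    ring
  -- third x-derivative
  have HC3 : pX (pX (pX (fun p => pY ψ p - pX (pX ψ) p - 2 * u p * ψ p - ∑ i, q i p * φ i p)))
      = fun p => pX (pX (pX (pY ψ))) p - pX (pX (pX (pX (pX ψ)))) p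
        - (2 * pX (pX (pX u)) p + 3 * (∑ i, pX (pX (q i)) p * r i p)
            + 3 * (∑ i, pX (q i) p * pX (r i) p) + (∑ i, q i p * pX (pX (r i)) p)) * ψ p
        - (6 * pX (pX u) p + 3 * (∑ i, pX (q i) p * r i p)
            + 2 * (∑ i, q i p * pX (r i) p)) * pX ψ p
        - (6 * pX u p + (∑ i, q i p * r i p)) * pX (pX ψ) p
        - 2 * u p * pX (pX (pX ψ)) p - (∑ i, pX (pX (pX (q i))) p * φ i p) := by
    rw [HC2]
    funext p
    simp (disch := fun_prop) only [KP.pX_add, KP.pX_sub, KP.pX_mul, KP.pX_const_mul,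
      KP.pX_const, KP.pX_sum, H6, H1, hfac, Finset.sum_add_distrib, Finset.sum_sub_distrib,
      ← Finset.sum_mul]
    ring
  -- x-derivative of pT psi
  have HTX1 : pX (pT ψ) = fun p => pX (pX (pX (pX ψ))) p
      + 3 * pX u p * pX ψ p + 3 * u p * pX (pX ψ) p
      + (3/2) * (pY u p + pX (pX u) p + (∑ i, pX (q i) p * r i p)
          + (∑ i, q i p * pX (r i) p)) * ψ p
      + (3/2) * (w p + pX u p + (∑ i, q i p * r i p)) * pX ψ p := by
    rw [H5]
    funext p
    simp (disch := fun_prop) only [KP.pX_add, KP.pX_sub, KP.pX_mul, KP.pX_const_mul,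
      KP.pX_const, KP.pX_sum, H6, H1, hfac, Finset.sum_add_distrib, Finset.sum_sub_distrib,
      ← Finset.sum_mul]
    ring
  have HTX2 : pX (pX (pT ψ)) = fun p => pX (pX (pX (pX (pX ψ)))) p
      + 3 * u p * pX (pX (pX ψ)) p + 6 * pX u p * pX (pX ψ) p + 3 * pX (pX u) p * pX ψ p
      + (3/2) * (pX (pY u) p + pX (pX (pX u)) p + (∑ i, pX (pX (q i)) p * r i p)
          + 2 * (∑ i, pX (q i) p * pX (r i) p) + (∑ i, q i p * pX (pX (r i)) p)) * ψ p
      + 3 * (pY u p + pX (pX u) p + (∑ i, pX (q i) p * r i p)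
          + (∑ i, q i p * pX (r i) p)) * pX ψ p
      + (3/2) * (w p + pX u p + (∑ i, q i p * r i p)) * pX (pX ψ) p := by
    rw [HTX1]
    funext p
    simp (disch := fun_prop) only [KP.pX_add, KP.pX_sub, KP.pX_mul, KP.pX_const_mul,
      KP.pX_const, KP.pX_sum, H6, H1, hfac, Finset.sum_add_distrib, Finset.sum_sub_distrib,
      ← Finset.sum_mul]
    ring
  -- y-derivative of pT psi
  have HTY : pY (pT ψ) = fun p => pX (pX (pX (pY ψ))) p
      + 3 * pY u p * pX ψ p + 3 * u p * pX (pY ψ) p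
      + (3/2) * (pY w p + pX (pY u) p + (∑ i, pY (q i) p * r i p)
          + (∑ i, q i p * pY (r i) p)) * ψ p
      + (3/2) * (w p + pX u p + (∑ i, q i p * r i p)) * pY ψ p := by
    rw [H5]
    funext p
    simp (disch := fun_prop) only [KP.pY_add, KP.pY_sub, KP.pY_mul, KP.pY_const_mul,
      KP.pY_const, KP.pY_sum, KP.comm_YX, hfac, Finset.sum_add_distrib,
      Finset.sum_sub_distrib, ← Finset.sum_mul]
    ring
  -- the source-sum evolution
  have CPhiT : ∀ p : ℝ × ℝ × ℝ, (∑ i, (pT (q i) p * φ i p + q i p * pT (φ i) p))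
      = (∑ i, pX (pX (pX (q i))) p * φ i p) + 3 * u p * (∑ i, pX (q i) p * φ i p)
        + (3/2) * w p * (∑ i, q i p * φ i p)
        + (3/2) * (∑ i, q i p * r i p) * (∑ i, q i p * φ i p)
        + (3/2) * pX u p * (∑ i, q i p * φ i p)
        + (∑ i, q i p * pX (pX (r i)) p) * ψ p
        - (∑ i, q i p * pX (r i) p) * pX ψ p
        + (∑ i, q i p * r i p) * pX (pX ψ) p
        + 3 * u p * ((∑ i, q i p * r i p) * ψ p) := by
    intro p
    calc (∑ i, (pT (q i) p * φ i p + q i p * pT (φ i) p))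
        = ∑ i, (pX (pX (pX (q i))) p * φ i p
            + (pX (q i) p * φ i p) * (3 * u p)
            + (q i p * φ i p) * ((3/2) * w p)
            + (q i p * φ i p) * ((3/2) * (∑ j, q j p * r j p))
            + (q i p * φ i p) * ((3/2) * pX u p)
            + (q i p * pX (pX (r i)) p) * ψ p
            - (q i p * pX (r i) p) * pX ψ p
            + (q i p * r i p) * pX (pX ψ) p
            + (q i p * r i p) * (3 * u p * ψ p)) :=
          Finset.sum_congr rfl fun i _ => by rw [h3 i p, h7 i p]; ring
      _ = _ := by
          simp only [Finset.sum_add_distrib, Finset.sum_sub_distrib, ← Finset.sum_mul]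
          ring
  -- final assembly
  intro p
  have commXX : pT (pX (pX ψ)) = pX (pX (pT ψ)) := by
    rw [KP.comm_TX (KP.contDiff_pX hψ), KP.comm_TX hψ]
  simp (disch := fun_prop) only [KP.pT_add, KP.pT_sub, KP.pT_mul, KP.pT_const_mul,
    KP.pT_const, KP.pT_sum]
  rw [CPhiT p]
  simp only [KP.comm_TY hψ, commXX]
  simp only [HTY, HTX2, HC3]
  simp only [HU, H5, HC1]
  ring
end

section
/- Let N be a positive integer, ζ_1,…,ζ_N real constants, and let u, q̂_1,…,q̂_N, r̂_1,…,r̂_N : ℝ² → ℝ be smooth functions of (x,t). Define on ℝ³ (coordinates (x,y,t)) the functions U(x,y,t) := u(x,t), Q_i(x,y,t) := exp(ζ_i² y) q̂_i(x,t), R_i(x,y,t) := exp(−ζ_i² y) r̂_i(x,t). If (U, Q_1,…,Q_N, R_1,…,R_N) satisfies the first type of KP equation with self-consistent sources, then: (a) q̂_{i,xx} + 2 u q̂_i = ζ_i² q̂_i and r̂_{i,xx} + 2 u r̂_i = ζ_i² r̂_i for i = 1,…,N; (b) ∂_x ( u_t − 3 u u_x − (1/4) u_{xxx} + ∑_{i=1}^N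 (q̂_i r̂_i)_x ) = 0, i.e. the x-derivative of the first type of KdV equation with self-consistent sources holds. (This is the 2-reduction of the extended KP hierarchy to the Gelfand–Dickey hierarchy with self-consistent sources.) -/
/-- Partial derivative in the first coordinate of a function on `ℝ²`. -/
noncomputable def dX (f : ℝ × ℝ → ℝ) (p : ℝ × ℝ) : ℝ :=
  deriv (fun s => f (s, p.2)) p.1

/-- Partial derivative in the second coordinate of a function on `ℝ²`. -/
noncomputable def dS (f : ℝ × ℝ → ℝ) (p : ℝ × ℝ) : ℝ :=
  deriv (fun s => f (p.1, s)) p.2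

/- ### Auxiliary lemmas -/

lemma sliceX_diff (f : ℝ × ℝ → ℝ) (hf : ContDiff ℝ (⊤ : ℕ∞) f) (t : ℝ) :
    Differentiable ℝ (fun s => f (s, t)) :=
  (hf.differentiable (by simp)).comp (differentiable_id.prodMk (differentiable_const t))

lemma dX_eq_fderiv (f : ℝ × ℝ → ℝ) (hf : ContDiff ℝ (⊤ : ℕ∞) f) (p : ℝ × ℝ) :
    dX f p = fderiv ℝ f p (1, 0) := by
  have h1 : HasDerivAt (fun s : ℝ => (s, p.2)) ((1 : ℝ), (0 : ℝ)) p.1 :=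
    (hasDerivAt_id p.1).prodMk (hasDerivAt_const p.1 p.2)
  have h2 := ((hf.differentiable (by simp) (p.1, p.2)).hasFDerivAt).comp_hasDerivAt p.1 h1
  simpa [dX, Function.comp_def] using h2.deriv

lemma dS_eq_fderiv (f : ℝ × ℝ → ℝ) (hf : ContDiff ℝ (⊤ : ℕ∞) f) (p : ℝ × ℝ) :
    dS f p = fderiv ℝ f p (0, 1) := by
  have h1 : HasDerivAt (fun s : ℝ => (p.1, s)) ((0 : ℝ), (1 : ℝ)) p.2 :=
    (hasDerivAt_const p.2 p.1).prodMk (hasDerivAt_id p.2)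
  have h2 := ((hf.differentiable (by simp) (p.1, p.2)).hasFDerivAt).comp_hasDerivAt p.2 h1
  simpa [dS, Function.comp_def] using h2.deriv

lemma contDiff_dX (f : ℝ × ℝ → ℝ) (hf : ContDiff ℝ (⊤ : ℕ∞) f) : ContDiff ℝ (⊤ : ℕ∞) (dX f) := by
  have h : dX f = fun p => fderiv ℝ f p (1, 0) := funext fun p => dX_eq_fderiv f hf p
  rw [h]
  exact (hf.fderiv_right (by simp)).clm_apply contDiff_const

lemma contDiff_dS (f : ℝ × ℝ → ℝ) (hf : ContDiff ℝ (⊤ : ℕ∞) f) : ContDiff ℝ (⊤ : ℕ∞) (dS f) := by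
  have h : dS f = fun p => fderiv ℝ f p (0, 1) := funext fun p => dS_eq_fderiv f hf p
  rw [h]
  exact (hf.fderiv_right (by simp)).clm_apply contDiff_const

lemma pX_lift (f : ℝ × ℝ → ℝ) (F : ℝ × ℝ × ℝ → ℝ)
    (hF : ∀ z : ℝ × ℝ × ℝ, F z = f (z.1, z.2.2)) (p : ℝ × ℝ × ℝ) :
    pX F p = dX f (p.1, p.2.2) := by
  unfold pX dX
  congr 1
  funext s
  exact hF (s, p.2.1, p.2.2)

lemma pT_lift (f : ℝ × ℝ → ℝ) (F : ℝ × ℝ × ℝ → ℝ)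
    (hF : ∀ z : ℝ × ℝ × ℝ, F z = f (z.1, z.2.2)) (p : ℝ × ℝ × ℝ) :
    pT F p = dS f (p.1, p.2.2) := by
  unfold pT dS
  congr 1
  funext s
  exact hF (p.1, p.2.1, s)

lemma pY_lift (f : ℝ × ℝ → ℝ) (F : ℝ × ℝ × ℝ → ℝ)
    (hF : ∀ z : ℝ × ℝ × ℝ, F z = f (z.1, z.2.2)) (p : ℝ × ℝ × ℝ) :
    pY F p = 0 := by
  unfold pY
  have h : (fun s => F (p.1, s, p.2.2)) = fun _ => f (p.1, p.2.2) := by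
    funext s; exact hF (p.1, s, p.2.2)
  rw [h]; exact deriv_const _ _

lemma exp_mul_deriv (c k y : ℝ) :
    deriv (fun s => Real.exp (c * s) * k) y = c * Real.exp (c * y) * k := by
  have h := ((Real.hasDerivAt_exp (c * y)).comp y
    ((hasDerivAt_id y).const_mul c)).mul_const k
  have h2 : HasDerivAt (fun s => Real.exp (c * s) * k)
      (Real.exp (c * y) * (c * 1) * k) y := h
  rw [h2.deriv]; ring

lemma pX_expLift (c : ℝ) (f : ℝ × ℝ → ℝ) (hf : ContDiff ℝ (⊤ : ℕ∞) f) (F : ℝ × ℝ × ℝ → ℝ)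
    (hF : ∀ z : ℝ × ℝ × ℝ, F z = Real.exp (c * z.2.1) * f (z.1, z.2.2)) (z : ℝ × ℝ × ℝ) :
    pX F z = Real.exp (c * z.2.1) * dX f (z.1, z.2.2) := by
  unfold pX
  have h : (fun s => F (s, z.2.1, z.2.2)) = fun s => Real.exp (c * z.2.1) * f (s, z.2.2) := by
    funext s; exact hF (s, z.2.1, z.2.2)
  rw [h, deriv_const_mul _ (sliceX_diff f hf z.2.2 z.1)]
  rfl

lemma pY_expLift (c : ℝ) (f : ℝ × ℝ → ℝ) (F : ℝ × ℝ × ℝ → ℝ)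
    (hF : ∀ z : ℝ × ℝ × ℝ, F z = Real.exp (c * z.2.1) * f (z.1, z.2.2)) (z : ℝ × ℝ × ℝ) :
    pY F z = c * Real.exp (c * z.2.1) * f (z.1, z.2.2) := by
  unfold pY
  have h : (fun s => F (z.1, s, z.2.2)) = fun s => Real.exp (c * s) * f (z.1, z.2.2) := by
    funext s; exact hF (z.1, s, z.2.2)
  rw [h, exp_mul_deriv]

lemma dX_add (f g : ℝ × ℝ → ℝ) (hf : ContDiff ℝ (⊤ : ℕ∞) f) (hg : ContDiff ℝ (⊤ : ℕ∞) g) (p : ℝ × ℝ) :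
    dX (fun z => f z + g z) p = dX f p + dX g p := by
  simp only [dX]
  exact deriv_add (sliceX_diff f hf p.2 p.1) (sliceX_diff g hg p.2 p.1)

lemma dX_const_mul (c : ℝ) (f : ℝ × ℝ → ℝ) (hf : ContDiff ℝ (⊤ : ℕ∞) f) (p : ℝ × ℝ) :
    dX (fun z => c * f z) p = c * dX f p := by
  simp only [dX]
  exact deriv_const_mul c (sliceX_diff f hf p.2 p.1)

lemma dX_sum {N : ℕ} (A : Fin N → ℝ × ℝ → ℝ) (hA : ∀ i, ContDiff ℝ (⊤ : ℕ∞) (A i)) (p : ℝ × ℝ) :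
    dX (fun z => ∑ i, A i z) p = ∑ i, dX (A i) p := by
  simp only [dX]
  exact deriv_fun_sum fun i _ => sliceX_diff _ (hA i) p.2 p.1

/-- The (4×) KdV left hand side. -/
noncomputable def kdv4 (u : ℝ × ℝ → ℝ) : ℝ × ℝ → ℝ :=
  fun w => 4 * dS u w - 12 * u w * dX u w - dX (dX (dX u)) w

lemma contDiff_kdv4 (u : ℝ × ℝ → ℝ) (hu : ContDiff ℝ (⊤ : ℕ∞) u) : ContDiff ℝ (⊤ : ℕ∞) (kdv4 u) :=
  (((contDiff_const.mul (contDiff_dS u hu)).sub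
    ((contDiff_const.mul hu).mul (contDiff_dX u hu))).sub
      (contDiff_dX _ (contDiff_dX _ (contDiff_dX u hu))))

/-- the 2-reduction of KPSCS-1 (with exponential `y`-dependence of the
sources) yields the first type of KdV equation with self-consistent sources
(up to an `x`-derivative). Here the second coordinate of `ℝ²` is `t`. -/
theorem stmt_6 (N : ℕ) (hN : 0 < N) (ζ : Fin N → ℝ)
    (u : ℝ × ℝ → ℝ) (qh rh : Fin N → ℝ × ℝ → ℝ)
    (hu : ContDiff ℝ (⊤ : ℕ∞) u)
    (hqh : ∀ i, ContDiff ℝ (⊤ : ℕ∞) (qh i)) (hrh : ∀ i, ContDiff ℝ (⊤ : ℕ∞) (rh i))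
    (U : ℝ × ℝ × ℝ → ℝ) (Q R : Fin N → ℝ × ℝ × ℝ → ℝ)
    (hU : ∀ x y t : ℝ, U (x, y, t) = u (x, t))
    (hQ : ∀ i, ∀ x y t : ℝ, Q i (x, y, t) = Real.exp (ζ i ^ 2 * y) * qh i (x, t))
    (hR : ∀ i, ∀ x y t : ℝ, R i (x, y, t) = Real.exp (-(ζ i ^ 2) * y) * rh i (x, t))
    (hmain : ∀ p, pX (fun z => 4 * pT U z - 12 * U z * pX U z - pX (pX (pX U)) z) p
        - 3 * pY (pY U) p + 4 * ∑ i, pX (pX (fun z => Q i z * R i z)) p = 0)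
    (hQy : ∀ i, ∀ p, pY (Q i) p = pX (pX (Q i)) p + 2 * U p * Q i p)
    (hRy : ∀ i, ∀ p, pY (R i) p = -(pX (pX (R i)) p) - 2 * U p * R i p) :
    (∀ i, ∀ p, dX (dX (qh i)) p + 2 * u p * qh i p = ζ i ^ 2 * qh i p)
    ∧ (∀ i, ∀ p, dX (dX (rh i)) p + 2 * u p * rh i p = ζ i ^ 2 * rh i p)
    ∧ (∀ p, dX (fun z => dS u z - 3 * u z * dX u z - (1/4) * dX (dX (dX u)) z
        + ∑ i, dX (fun w => qh i w * rh i w) z) p = 0) := by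
  have hU' : ∀ z : ℝ × ℝ × ℝ, U z = u (z.1, z.2.2) := fun z => hU z.1 z.2.1 z.2.2
  have hQ' : ∀ i, ∀ z : ℝ × ℝ × ℝ,
      Q i z = Real.exp (ζ i ^ 2 * z.2.1) * qh i (z.1, z.2.2) :=
    fun i z => hQ i z.1 z.2.1 z.2.2
  have hR' : ∀ i, ∀ z : ℝ × ℝ × ℝ,
      R i z = Real.exp (-(ζ i ^ 2) * z.2.1) * rh i (z.1, z.2.2) :=
    fun i z => hR i z.1 z.2.1 z.2.2
  -- derivatives of U
  have hUx : ∀ z, pX U z = dX u (z.1, z.2.2) := pX_lift u U hU'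
  have hUxx : ∀ z, pX (pX U) z = dX (dX u) (z.1, z.2.2) := pX_lift (dX u) (pX U) hUx
  have hUxxx : ∀ z, pX (pX (pX U)) z = dX (dX (dX u)) (z.1, z.2.2) :=
    pX_lift (dX (dX u)) (pX (pX U)) hUxx
  have hUt : ∀ z, pT U z = dS u (z.1, z.2.2) := pT_lift u U hU'
  have hUy : ∀ z, pY U z = 0 := pY_lift u U hU'
  have hUyy : ∀ z, pY (pY U) z = 0 :=
    pY_lift (fun _ => (0 : ℝ)) (pY U) (fun z => hUy z)
  -- derivatives of Q and R
  have hQx : ∀ i z, pX (Q i) z = Real.exp (ζ i ^ 2 * z.2.1) * dX (qh i) (z.1, z.2.2) :=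
    fun i => pX_expLift (ζ i ^ 2) (qh i) (hqh i) (Q i) (hQ' i)
  have hQxx : ∀ i z,
      pX (pX (Q i)) z = Real.exp (ζ i ^ 2 * z.2.1) * dX (dX (qh i)) (z.1, z.2.2) :=
    fun i => pX_expLift (ζ i ^ 2) (dX (qh i)) (contDiff_dX _ (hqh i)) (pX (Q i)) (hQx i)
  have hQyv : ∀ i z,
      pY (Q i) z = ζ i ^ 2 * Real.exp (ζ i ^ 2 * z.2.1) * qh i (z.1, z.2.2) :=
    fun i => pY_expLift (ζ i ^ 2) (qh i) (Q i) (hQ' i)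
  have hRx : ∀ i z, pX (R i) z = Real.exp (-(ζ i ^ 2) * z.2.1) * dX (rh i) (z.1, z.2.2) :=
    fun i => pX_expLift (-(ζ i ^ 2)) (rh i) (hrh i) (R i) (hR' i)
  have hRxx : ∀ i z,
      pX (pX (R i)) z = Real.exp (-(ζ i ^ 2) * z.2.1) * dX (dX (rh i)) (z.1, z.2.2) :=
    fun i => pX_expLift (-(ζ i ^ 2)) (dX (rh i)) (contDiff_dX _ (hrh i)) (pX (R i)) (hRx i)
  have hRyv : ∀ i z,
      pY (R i) z = -(ζ i ^ 2) * Real.exp (-(ζ i ^ 2) * z.2.1) * rh i (z.1, z.2.2) :=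
    fun i => pY_expLift (-(ζ i ^ 2)) (rh i) (R i) (hR' i)
  -- part (a): eigenvalue equation for qh
  have partQ : ∀ i, ∀ p, dX (dX (qh i)) p + 2 * u p * qh i p = ζ i ^ 2 * qh i p := by
    intro i p
    have h := hQy i (p.1, 0, p.2)
    rw [hQyv i (p.1, 0, p.2), hQxx i (p.1, 0, p.2), hU' (p.1, 0, p.2),
      hQ' i (p.1, 0, p.2)] at h
    simp only [mul_zero, Real.exp_zero, one_mul, Prod.mk.eta] at h
    linarith
  -- part (a'): eigenvalue equation for rh
  have partR : ∀ i, ∀ p, dX (dX (rh i)) p + 2 * u p * rh i p = ζ i ^ 2 * rh i p := by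
    intro i p
    have h := hRy i (p.1, 0, p.2)
    rw [hRyv i (p.1, 0, p.2), hRxx i (p.1, 0, p.2), hU' (p.1, 0, p.2),
      hR' i (p.1, 0, p.2)] at h
    simp only [mul_zero, Real.exp_zero, one_mul, Prod.mk.eta, neg_mul, neg_zero] at h
    linarith
  refine ⟨partQ, partR, ?_⟩
  -- the products Q i * R i do not depend on y
  have hQR : ∀ i, ∀ z : ℝ × ℝ × ℝ,
      Q i z * R i z = (fun w => qh i w * rh i w) (z.1, z.2.2) := by
    intro i z
    have he : Real.exp (ζ i ^ 2 * z.2.1) * Real.exp (-(ζ i ^ 2) * z.2.1) = 1 := by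
      rw [← Real.exp_add, show ζ i ^ 2 * z.2.1 + -(ζ i ^ 2) * z.2.1 = 0 by ring,
        Real.exp_zero]
    rw [hQ' i z, hR' i z]
    simp only
    linear_combination (qh i (z.1, z.2.2) * rh i (z.1, z.2.2)) * he
  have hQRx : ∀ i z, pX (fun z => Q i z * R i z) z
      = dX (fun w => qh i w * rh i w) (z.1, z.2.2) :=
    fun i => pX_lift _ _ (hQR i)
  have hQRxx : ∀ i z, pX (pX (fun z => Q i z * R i z)) z
      = dX (dX (fun w => qh i w * rh i w)) (z.1, z.2.2) :=
    fun i => pX_lift _ _ (hQRx i)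
  -- the main KP equation reduces to a 2D identity
  have hB : ∀ z : ℝ × ℝ × ℝ,
      (fun z => 4 * pT U z - 12 * U z * pX U z - pX (pX (pX U)) z) z
        = kdv4 u (z.1, z.2.2) := by
    intro z
    simp only [kdv4, hUt z, hU' z, hUx z, hUxxx z]
  have hPB : ∀ p, pX (fun z => 4 * pT U z - 12 * U z * pX U z - pX (pX (pX U)) z) p
      = dX (kdv4 u) (p.1, p.2.2) := pX_lift (kdv4 u) _ hB
  have hm : ∀ w : ℝ × ℝ, dX (kdv4 u) w
      + 4 * ∑ i, dX (dX (fun z => qh i z * rh i z)) w = 0 := by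
    intro w
    have h := hmain (w.1, 0, w.2)
    rw [hPB (w.1, 0, w.2), hUyy (w.1, 0, w.2)] at h
    simp only [hQRxx] at h
    simp only [mul_zero, sub_zero, Prod.mk.eta] at h
    linarith
  -- conclude
  intro p
  have hfun : (fun z => dS u z - 3 * u z * dX u z - (1/4) * dX (dX (dX u)) z
        + ∑ i, dX (fun w => qh i w * rh i w) z)
      = fun z => (1/4 : ℝ) * kdv4 u z + ∑ i, dX (fun w => qh i w * rh i w) z := by
    funext z
    simp only [kdv4]
    ring
  have hS : ∀ i : Fin N, ContDiff ℝ (⊤ : ℕ∞) (dX (fun w => qh i w * rh i w)) :=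
    fun i => contDiff_dX _ ((hqh i).mul (hrh i))
  rw [hfun, dX_add _ _ (contDiff_const.mul (contDiff_kdv4 u hu)) (ContDiff.sum fun i _ => hS i),
    dX_const_mul _ _ (contDiff_kdv4 u hu), dX_sum _ hS]
  linarith [hm p]
end

section
/- Let N be a positive integer, ζ_1,…,ζ_N real constants, and let u, w, q̂_1,…,q̂_N, r̂_1,…,r̂_N : ℝ² → ℝ be smooth functions of (x,y) with w_x = u_y. Define on ℝ³ (coordinates (x,y,t)) the functions U(x,y,t) := u(x,y), W(x,y,t) := w(x,y), Q_i := exp(ζ_i³ t) q̂_i(x,y), R_i := exp(−ζ_i³ t) r̂_i(x,y). If (U, W, Q_1,…,Q_N, R_1,…,R_N) satisfies the second type of KP equation with self-consistent sources (with auxiliary potential W), then: (a) q̂_{i,xxx} + 3 u q̂_{i,x} + q̂_i ((3/2) w + (3/2) u_x + (3/2) ∑_{j=1}^N q̂_j r̂_j) = ζ_i³ q̂_i for i = 1,…,N; (b) r̂_{i,xxx} + 3 u r̂_{i,x} − r̂_i ((3/2) w − (3/2) u_x + (3/2) ∑_{j=1}^N q̂_j r̂_j) = −ζ_i³ r̂_i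 for i = 1,…,N; (c) u_{yy} + (1/3) u_{xxxx} + 2 (u²)_{xx} + ∑_{i=1}^N (q̂_{i,x} r̂_i − q̂_i r̂_{i,x})_{xx} + ∑_{i=1}^N (q̂_i r̂_i)_{xy} = 0, i.e. the first type of Boussinesq equation with self-consistent sources holds (with y as the time variable). (This is the 3-reduction of the extended KP hierarchy to the Gelfand–Dickey hierarchy with self-consistent sources.) -/
/- ### Auxiliary lemmas -/

lemma aux_hlineX {g : ℝ × ℝ → ℝ} (hg : ContDiff ℝ (⊤ : ℕ∞) g) (x y : ℝ) :
    HasDerivAt (fun s => g (s, y)) (dX g (x, y)) x := by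
  have h : DifferentiableAt ℝ (fun s => g (s, y)) x :=
    ((hg.comp (contDiff_id.prodMk contDiff_const)).differentiable (by simp)).differentiableAt
  simpa [dX] using h.hasDerivAt

lemma aux_hlineY {g : ℝ × ℝ → ℝ} (hg : ContDiff ℝ (⊤ : ℕ∞) g) (x y : ℝ) :
    HasDerivAt (fun s => g (x, s)) (dS g (x, y)) y := by
  have h : DifferentiableAt ℝ (fun s => g (x, s)) y :=
    ((hg.comp (contDiff_const.prodMk contDiff_id)).differentiable (by simp)).differentiableAt
  simpa [dS] using h.hasDerivAt

lemma aux_dX_fderiv {g : ℝ × ℝ → ℝ} (hg : ContDiff ℝ (⊤ : ℕ∞) g) (p : ℝ × ℝ) :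
    dX g p = fderiv ℝ g p ((1 : ℝ), (0 : ℝ)) := by
  obtain ⟨x, y⟩ := p
  have hl : HasDerivAt (fun s : ℝ => (s, y)) ((1 : ℝ), (0 : ℝ)) x :=
    HasDerivAt.prodMk (hasDerivAt_id x) (hasDerivAt_const x y)
  have h2 : HasDerivAt (fun s => g (s, y)) (fderiv ℝ g (x, y) ((1 : ℝ), (0 : ℝ))) x :=
    ((hg.differentiable (by simp) (x, y)).hasFDerivAt).comp_hasDerivAt x hl
  exact (aux_hlineX hg x y).unique h2

lemma aux_dS_fderiv {g : ℝ × ℝ → ℝ} (hg : ContDiff ℝ (⊤ : ℕ∞) g) (p : ℝ × ℝ) :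
    dS g p = fderiv ℝ g p ((0 : ℝ), (1 : ℝ)) := by
  obtain ⟨x, y⟩ := p
  have hl : HasDerivAt (fun s : ℝ => (x, s)) ((0 : ℝ), (1 : ℝ)) y :=
    HasDerivAt.prodMk (hasDerivAt_const y x) (hasDerivAt_id y)
  have h2 : HasDerivAt (fun s => g (x, s)) (fderiv ℝ g (x, y) ((0 : ℝ), (1 : ℝ))) y :=
    ((hg.differentiable (by simp) (x, y)).hasFDerivAt).comp_hasDerivAt y hl
  exact (aux_hlineY hg x y).unique h2

lemma aux_contDiff_dX {g : ℝ × ℝ → ℝ} (hg : ContDiff ℝ (⊤ : ℕ∞) g) : ContDiff ℝ (⊤ : ℕ∞) (dX g) := by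
  have : dX g = fun p => fderiv ℝ g p ((1 : ℝ), (0 : ℝ)) := funext fun p => aux_dX_fderiv hg p
  rw [this]
  exact ((ContinuousLinearMap.apply ℝ ℝ ((1 : ℝ), (0 : ℝ))).contDiff).comp
    (hg.fderiv_right (by simp))

lemma aux_contDiff_dS {g : ℝ × ℝ → ℝ} (hg : ContDiff ℝ (⊤ : ℕ∞) g) : ContDiff ℝ (⊤ : ℕ∞) (dS g) := by
  have : dS g = fun p => fderiv ℝ g p ((0 : ℝ), (1 : ℝ)) := funext fun p => aux_dS_fderiv hg p
  rw [this]
  exact ((ContinuousLinearMap.apply ℝ ℝ ((0 : ℝ), (1 : ℝ))).contDiff).comp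
    (hg.fderiv_right (by simp))

lemma aux_clairaut {g : ℝ × ℝ → ℝ} (hg : ContDiff ℝ (⊤ : ℕ∞) g) (p : ℝ × ℝ) :
    dX (dS g) p = dS (dX g) p := by
  set f' := fderiv ℝ g with hf'def
  have h1 : ∀ z, HasFDerivAt g (f' z) z := fun z => (hg.differentiable (by simp) z).hasFDerivAt
  have hf' : ContDiff ℝ (⊤ : ℕ∞) f' := hg.fderiv_right (by simp)
  have h2 : HasFDerivAt f' (fderiv ℝ f' p) p := (hf'.differentiable (by simp) p).hasFDerivAt
  have e1 : dX (dS g) p = fderiv ℝ f' p ((1 : ℝ), (0 : ℝ)) ((0 : ℝ), (1 : ℝ)) := by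
    have hds : dS g = fun z => f' z ((0 : ℝ), (1 : ℝ)) := funext fun z => aux_dS_fderiv hg z
    rw [aux_dX_fderiv (aux_contDiff_dS hg) p, hds]
    have := ((ContinuousLinearMap.apply ℝ ℝ ((0 : ℝ), (1 : ℝ))).hasFDerivAt.comp p h2).fderiv
    rw [show (fun z => (f' z) ((0:ℝ), (1:ℝ))) = ⇑((ContinuousLinearMap.apply ℝ ℝ) ((0:ℝ),(1:ℝ))) ∘ f' from rfl, this]; rfl
  have e2 : dS (dX g) p = fderiv ℝ f' p ((0 : ℝ), (1 : ℝ)) ((1 : ℝ), (0 : ℝ)) := by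
    have hdx : dX g = fun z => f' z ((1 : ℝ), (0 : ℝ)) := funext fun z => aux_dX_fderiv hg z
    rw [aux_dS_fderiv (aux_contDiff_dX hg) p, hdx]
    have := ((ContinuousLinearMap.apply ℝ ℝ ((1 : ℝ), (0 : ℝ))).hasFDerivAt.comp p h2).fderiv
    rw [show (fun z => (f' z) ((1:ℝ), (0:ℝ))) = ⇑((ContinuousLinearMap.apply ℝ ℝ) ((1:ℝ),(0:ℝ))) ∘ f' from rfl, this]; rfl
  rw [e1, e2, second_derivative_symmetric h1 h2 _ _]

lemma aux_pX_red {f : ℝ × ℝ × ℝ → ℝ} {g : ℝ × ℝ → ℝ}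
    (h : f = fun z => g (z.1, z.2.1)) :
    pX f = fun z => dX g (z.1, z.2.1) := by
  funext z; simp only [pX, dX, h]

lemma aux_pY_red {f : ℝ × ℝ × ℝ → ℝ} {g : ℝ × ℝ → ℝ}
    (h : f = fun z => g (z.1, z.2.1)) :
    pY f = fun z => dS g (z.1, z.2.1) := by
  funext z; simp only [pY, dS, h]

lemma aux_pT_red {f : ℝ × ℝ × ℝ → ℝ} {g : ℝ × ℝ → ℝ}
    (h : f = fun z => g (z.1, z.2.1)) :
    pT f = fun _ => 0 := by
  funext z; simp [pT, h]

lemma aux_pX_redc {f : ℝ × ℝ × ℝ → ℝ} {g : ℝ × ℝ → ℝ} {c : ℝ}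
    (h : f = fun z => Real.exp (c * z.2.2) * g (z.1, z.2.1)) :
    pX f = fun z => Real.exp (c * z.2.2) * dX g (z.1, z.2.1) := by
  funext z; simp only [pX, dX, h]
  exact deriv_const_mul_field _

lemma aux_pT_exp {f : ℝ × ℝ × ℝ → ℝ} {g : ℝ × ℝ → ℝ} {c : ℝ}
    (h : f = fun z => Real.exp (c * z.2.2) * g (z.1, z.2.1)) (x y t : ℝ) :
    pT f (x, y, t) = c * Real.exp (c * t) * g (x, y) := by
  simp only [pT, h]
  have hd : HasDerivAt (fun s => Real.exp (c * s) * g (x, y))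
      (Real.exp (c * t) * c * g (x, y)) t := by
    have := (((hasDerivAt_id t).const_mul c).exp).mul_const (g (x, y))
    simpa using this
  rw [hd.deriv]; ring

/-- the 3-reduction of KPSCS-2 (with exponential `t`-dependence of the
sources) yields the first type of Boussinesq equation with self-consistent sources.
Here the coordinates of `ℝ²` are `(x, y)` (so `dS` is `∂/∂y`). -/
theorem stmt_9 (N : ℕ) (hN : 0 < N) (ζ : Fin N → ℝ)
    (u w : ℝ × ℝ → ℝ) (qh rh : Fin N → ℝ × ℝ → ℝ)
    (hu : ContDiff ℝ (⊤ : ℕ∞) u) (hw : ContDiff ℝ (⊤ : ℕ∞) w)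
    (hqh : ∀ i, ContDiff ℝ (⊤ : ℕ∞) (qh i)) (hrh : ∀ i, ContDiff ℝ (⊤ : ℕ∞) (rh i))
    (hwx : ∀ p, dX w p = dS u p)
    (U W : ℝ × ℝ × ℝ → ℝ) (Q R : Fin N → ℝ × ℝ × ℝ → ℝ)
    (hU : ∀ x y t : ℝ, U (x, y, t) = u (x, y))
    (hW : ∀ x y t : ℝ, W (x, y, t) = w (x, y))
    (hQ : ∀ i, ∀ x y t : ℝ, Q i (x, y, t) = Real.exp (ζ i ^ 3 * t) * qh i (x, y))
    (hR : ∀ i, ∀ x y t : ℝ, R i (x, y, t) = Real.exp (-(ζ i ^ 3) * t) * rh i (x, y))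
    (hmain : ∀ p, 4 * pT U p - 12 * U p * pX U p - pX (pX (pX U)) p - 3 * pY W p
        = 3 * ∑ i, (pX (pX (Q i)) p * R i p - Q i p * pX (pX (R i)) p
            + pY (fun z => Q i z * R i z) p))
    (hQt : ∀ i, ∀ p, pT (Q i) p = pX (pX (pX (Q i))) p + 3 * U p * pX (Q i) p
        + (3/2) * Q i p * W p + (3/2) * Q i p * ∑ j, Q j p * R j p
        + (3/2) * pX U p * Q i p)
    (hRt : ∀ i, ∀ p, pT (R i) p = pX (pX (pX (R i))) p + 3 * U p * pX (R i) p
        - (3/2) * R i p * W p - (3/2) * R i p * ∑ j, Q j p * R j p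
        + (3/2) * pX U p * R i p) :
    (∀ i, ∀ p, dX (dX (dX (qh i))) p + 3 * u p * dX (qh i) p
        + qh i p * ((3/2) * w p + (3/2) * dX u p + (3/2) * ∑ j, qh j p * rh j p)
        = ζ i ^ 3 * qh i p)
    ∧ (∀ i, ∀ p, dX (dX (dX (rh i))) p + 3 * u p * dX (rh i) p
        - rh i p * ((3/2) * w p - (3/2) * dX u p + (3/2) * ∑ j, qh j p * rh j p)
        = -(ζ i ^ 3) * rh i p)
    ∧ (∀ p, dS (dS u) p + (1/3) * dX (dX (dX (dX u))) p
        + 2 * dX (dX (fun z => u z ^ 2)) p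
        + ∑ i, dX (dX (fun z => dX (qh i) z * rh i z - qh i z * dX (rh i) z)) p
        + ∑ i, dS (dX (fun z => qh i z * rh i z)) p = 0) := by
  -- function-level reformulations
  have hUf : U = fun z : ℝ × ℝ × ℝ => u (z.1, z.2.1) := funext fun z => hU z.1 z.2.1 z.2.2
  have hWf : W = fun z : ℝ × ℝ × ℝ => w (z.1, z.2.1) := funext fun z => hW z.1 z.2.1 z.2.2
  have hQf : ∀ i, Q i = fun z : ℝ × ℝ × ℝ => Real.exp (ζ i ^ 3 * z.2.2) * qh i (z.1, z.2.1) :=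
    fun i => funext fun z => hQ i z.1 z.2.1 z.2.2
  have hRf : ∀ i, R i = fun z : ℝ × ℝ × ℝ => Real.exp (-(ζ i ^ 3) * z.2.2) * rh i (z.1, z.2.1) :=
    fun i => funext fun z => hR i z.1 z.2.1 z.2.2
  have hpXU : pX U = fun z => dX u (z.1, z.2.1) := aux_pX_red hUf
  have hpX3U : pX (pX (pX U)) = fun z => dX (dX (dX u)) (z.1, z.2.1) :=
    aux_pX_red (aux_pX_red hpXU)
  have hpYW : pY W = fun z => dS w (z.1, z.2.1) := aux_pY_red hWf
  have hpTU : pT U = fun _ => 0 := aux_pT_red hUf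
  have hpXQ : ∀ i, pX (Q i)
      = fun z => Real.exp (ζ i ^ 3 * z.2.2) * dX (qh i) (z.1, z.2.1) :=
    fun i => aux_pX_redc (hQf i)
  have hpX2Q : ∀ i, pX (pX (Q i))
      = fun z => Real.exp (ζ i ^ 3 * z.2.2) * dX (dX (qh i)) (z.1, z.2.1) :=
    fun i => aux_pX_redc (hpXQ i)
  have hpX3Q : ∀ i, pX (pX (pX (Q i)))
      = fun z => Real.exp (ζ i ^ 3 * z.2.2) * dX (dX (dX (qh i))) (z.1, z.2.1) :=
    fun i => aux_pX_redc (hpX2Q i)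
  have hpXR : ∀ i, pX (R i)
      = fun z => Real.exp (-(ζ i ^ 3) * z.2.2) * dX (rh i) (z.1, z.2.1) :=
    fun i => aux_pX_redc (hRf i)
  have hpX2R : ∀ i, pX (pX (R i))
      = fun z => Real.exp (-(ζ i ^ 3) * z.2.2) * dX (dX (rh i)) (z.1, z.2.1) :=
    fun i => aux_pX_redc (hpXR i)
  have hpX3R : ∀ i, pX (pX (pX (R i)))
      = fun z => Real.exp (-(ζ i ^ 3) * z.2.2) * dX (dX (dX (rh i))) (z.1, z.2.1) :=
    fun i => aux_pX_redc (hpX2R i)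
  have hQRf : ∀ i, (fun z => Q i z * R i z)
      = fun z : ℝ × ℝ × ℝ => (fun p => qh i p * rh i p) (z.1, z.2.1) := by
    intro i; funext z
    show Q i z * R i z = qh i (z.1, z.2.1) * rh i (z.1, z.2.1)
    have h0 : Real.exp (ζ i ^ 3 * z.2.2) * Real.exp (-(ζ i ^ 3) * z.2.2) = 1 := by
      rw [← Real.exp_add, show ζ i ^ 3 * z.2.2 + -(ζ i ^ 3) * z.2.2 = 0 by ring,
        Real.exp_zero]
    rw [hQ i z.1 z.2.1 z.2.2, hR i z.1 z.2.1 z.2.2]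
    linear_combination (qh i (z.1, z.2.1) * rh i (z.1, z.2.1)) * h0
  have hpYQR : ∀ i, pY (fun z => Q i z * R i z)
      = fun z => dS (fun p => qh i p * rh i p) (z.1, z.2.1) :=
    fun i => aux_pY_red (g := fun p => qh i p * rh i p) (hQRf i)
  -- smoothness facts
  have hu1 : ContDiff ℝ (⊤ : ℕ∞) (dX u) := aux_contDiff_dX hu
  have hu2 : ContDiff ℝ (⊤ : ℕ∞) (dX (dX u)) := aux_contDiff_dX hu1
  have hu3 : ContDiff ℝ (⊤ : ℕ∞) (dX (dX (dX u))) := aux_contDiff_dX hu2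
  have hwS : ContDiff ℝ (⊤ : ℕ∞) (dS w) := aux_contDiff_dS hw
  have hq1 : ∀ i, ContDiff ℝ (⊤ : ℕ∞) (dX (qh i)) := fun i => aux_contDiff_dX (hqh i)
  have hq2 : ∀ i, ContDiff ℝ (⊤ : ℕ∞) (dX (dX (qh i))) := fun i => aux_contDiff_dX (hq1 i)
  have hr1 : ∀ i, ContDiff ℝ (⊤ : ℕ∞) (dX (rh i)) := fun i => aux_contDiff_dX (hrh i)
  have hr2 : ∀ i, ContDiff ℝ (⊤ : ℕ∞) (dX (dX (rh i))) := fun i => aux_contDiff_dX (hr1 i)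
  have hqr : ∀ i, ContDiff ℝ (⊤ : ℕ∞) (fun z => qh i z * rh i z) := fun i => (hqh i).mul (hrh i)
  have hqrS : ∀ i, ContDiff ℝ (⊤ : ℕ∞) (dS fun z => qh i z * rh i z) :=
    fun i => aux_contDiff_dS (hqr i)
  refine ⟨?_, ?_, ?_⟩
  · -- part (a)
    intro i p
    obtain ⟨x, y⟩ := p
    have h := hQt i (x, y, 0)
    rw [aux_pT_exp (hQf i) x y 0] at h
    simp only [hpX3Q] at h
    simp only [hpXQ] at h
    simp only [hpXU] at h
    simp only [hU, hW, hQ, hR] at h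
    norm_num [Real.exp_zero] at h
    linear_combination -h
  · -- part (b)
    intro i p
    obtain ⟨x, y⟩ := p
    have h := hRt i (x, y, 0)
    rw [aux_pT_exp (hRf i) x y 0] at h
    simp only [hpX3R] at h
    simp only [hpXR] at h
    simp only [hpXU] at h
    simp only [hU, hW, hQ, hR] at h
    norm_num [Real.exp_zero] at h
    linear_combination -h
  · -- part (c)
    -- the reduced 2D identity coming from hmain
    have key : ∀ a b : ℝ,
        4 * (u (a, b) * dX u (a, b)) + (1/3) * dX (dX (dX u)) (a, b) + dS w (a, b)
        + (∑ i, (dX (dX (qh i)) (a, b) * rh i (a, b) - qh i (a, b) * dX (dX (rh i)) (a, b)))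
        + (∑ i, dS (fun z => qh i z * rh i z) (a, b)) = 0 := by
      intro a b
      have h := hmain (a, b, 0)
      simp only [hpTU] at h
      simp only [hpX3U] at h
      simp only [hpXU] at h
      simp only [hpYW] at h
      simp only [hpYQR] at h
      simp only [hpX2Q] at h
      simp only [hpX2R] at h
      simp only [hU, hQ, hR] at h
      norm_num [Real.exp_zero] at h
      have hsplit : ∑ i, (dX (dX (qh i)) (a, b) * rh i (a, b)
            - qh i (a, b) * dX (dX (rh i)) (a, b) + dS (fun z => qh i z * rh i z) (a, b))
          = (∑ i, (dX (dX (qh i)) (a, b) * rh i (a, b)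
              - qh i (a, b) * dX (dX (rh i)) (a, b)))
          + ∑ i, dS (fun z => qh i z * rh i z) (a, b) := Finset.sum_add_distrib
      linarith [hsplit]
    intro p
    obtain ⟨x, y⟩ := p
    have H1 : HasDerivAt (fun s => 4 * (u (s, y) * dX u (s, y)))
        (4 * (dX u (x, y) * dX u (x, y) + u (x, y) * dX (dX u) (x, y))) x :=
      ((aux_hlineX hu x y).mul (aux_hlineX hu1 x y)).const_mul 4
    have H2 : HasDerivAt (fun s => (1/3) * dX (dX (dX u)) (s, y))
        ((1/3) * dX (dX (dX (dX u))) (x, y)) x := (aux_hlineX hu3 x y).const_mul (1/3)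
    have H3 : HasDerivAt (fun s => dS w (s, y)) (dX (dS w) (x, y)) x := aux_hlineX hwS x y
    have H4 : HasDerivAt (fun s => ∑ i, (dX (dX (qh i)) (s, y) * rh i (s, y)
          - qh i (s, y) * dX (dX (rh i)) (s, y)))
        (∑ i, (dX (dX (dX (qh i))) (x, y) * rh i (x, y)
          + dX (dX (qh i)) (x, y) * dX (rh i) (x, y)
          - (dX (qh i) (x, y) * dX (dX (rh i)) (x, y)
            + qh i (x, y) * dX (dX (dX (rh i))) (x, y)))) x :=
      HasDerivAt.fun_sum fun i _ =>
        ((aux_hlineX (hq2 i) x y).mul (aux_hlineX (hrh i) x y)).sub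
          ((aux_hlineX (hqh i) x y).mul (aux_hlineX (hr2 i) x y))
    have H5 : HasDerivAt (fun s => ∑ i, dS (fun z => qh i z * rh i z) (s, y))
        (∑ i, dX (dS fun z => qh i z * rh i z) (x, y)) x :=
      HasDerivAt.fun_sum fun i _ => aux_hlineX (hqrS i) x y
    have Htot : HasDerivAt (fun s : ℝ => 4 * (u (s, y) * dX u (s, y))
        + (1/3) * dX (dX (dX u)) (s, y) + dS w (s, y)
        + ∑ i, (dX (dX (qh i)) (s, y) * rh i (s, y) - qh i (s, y) * dX (dX (rh i)) (s, y))
        + ∑ i, dS (fun z => qh i z * rh i z) (s, y))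
        (4 * (dX u (x, y) * dX u (x, y) + u (x, y) * dX (dX u) (x, y))
        + (1/3) * dX (dX (dX (dX u))) (x, y) + dX (dS w) (x, y)
        + ∑ i, (dX (dX (dX (qh i))) (x, y) * rh i (x, y)
          + dX (dX (qh i)) (x, y) * dX (rh i) (x, y)
          - (dX (qh i) (x, y) * dX (dX (rh i)) (x, y)
            + qh i (x, y) * dX (dX (dX (rh i))) (x, y)))
        + ∑ i, dX (dS fun z => qh i z * rh i z) (x, y)) x :=
      (((H1.add H2).add H3).add H4).add H5
    have hfun : (fun s : ℝ => 4 * (u (s, y) * dX u (s, y))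
        + (1/3) * dX (dX (dX u)) (s, y) + dS w (s, y)
        + ∑ i, (dX (dX (qh i)) (s, y) * rh i (s, y) - qh i (s, y) * dX (dX (rh i)) (s, y))
        + ∑ i, dS (fun z => qh i z * rh i z) (s, y)) = fun _ => (0 : ℝ) :=
      funext fun s => key s y
    rw [hfun] at Htot
    have hD := Htot.unique (hasDerivAt_const x 0)
    -- identify each term of the goal
    have e1 : dS (dS u) (x, y) = dX (dS w) (x, y) := by
      have hxw : dX w = dS u := funext hwx
      rw [← hxw, ← aux_clairaut hw (x, y)]
    have hsq : dX (fun z => u z ^ 2) = fun z => 2 * (u z * dX u z) := by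
      funext z
      obtain ⟨a, b⟩ := z
      have h := ((aux_hlineX hu a b).pow 2).deriv
      exact h.trans (by push_cast; ring)
    have e3 : 2 * dX (dX (fun z => u z ^ 2)) (x, y)
        = 4 * (dX u (x, y) * dX u (x, y) + u (x, y) * dX (dX u) (x, y)) := by
      rw [hsq]
      have h := (((aux_hlineX hu x y).mul (aux_hlineX hu1 x y)).const_mul 2).deriv
      have h2 : dX (fun z => 2 * (u z * dX u z)) (x, y)
          = 2 * (dX u (x, y) * dX u (x, y) + u (x, y) * dX (dX u) (x, y)) := h
      rw [h2]; ring
    have e4 : ∀ i, dX (dX (fun z => dX (qh i) z * rh i z - qh i z * dX (rh i) z)) (x, y)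
        = dX (dX (dX (qh i))) (x, y) * rh i (x, y)
          + dX (dX (qh i)) (x, y) * dX (rh i) (x, y)
          - (dX (qh i) (x, y) * dX (dX (rh i)) (x, y)
            + qh i (x, y) * dX (dX (dX (rh i))) (x, y)) := by
      intro i
      have inner : dX (fun z => dX (qh i) z * rh i z - qh i z * dX (rh i) z)
          = fun z => dX (dX (qh i)) z * rh i z - qh i z * dX (dX (rh i)) z := by
        funext z
        obtain ⟨a, b⟩ := z
        have h := (((aux_hlineX (hq1 i) a b).mul (aux_hlineX (hrh i) a b)).sub
          ((aux_hlineX (hqh i) a b).mul (aux_hlineX (hr1 i) a b))).deriv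
        exact h.trans (by ring)
      rw [inner]
      exact (((aux_hlineX (hq2 i) x y).mul (aux_hlineX (hrh i) x y)).sub
        ((aux_hlineX (hqh i) x y).mul (aux_hlineX (hr2 i) x y))).deriv
    have e5 : ∀ i, dS (dX fun z => qh i z * rh i z) (x, y)
        = dX (dS fun z => qh i z * rh i z) (x, y) :=
      fun i => (aux_clairaut (hqr i) (x, y)).symm
    have s4 : ∑ i, dX (dX (fun z => dX (qh i) z * rh i z - qh i z * dX (rh i) z)) (x, y)
        = ∑ i, (dX (dX (dX (qh i))) (x, y) * rh i (x, y)
          + dX (dX (qh i)) (x, y) * dX (rh i) (x, y)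
          - (dX (qh i) (x, y) * dX (dX (rh i)) (x, y)
            + qh i (x, y) * dX (dX (dX (rh i))) (x, y))) :=
      Finset.sum_congr rfl fun i _ => e4 i
    have s5 : ∑ i, dS (dX fun z => qh i z * rh i z) (x, y)
        = ∑ i, dX (dS fun z => qh i z * rh i z) (x, y) :=
      Finset.sum_congr rfl fun i _ => e5 i
    rw [e1, e3, s4, s5]
    linarith [hD]
end

section
/- Let N be a positive integer and let u, q̂_1,…,q̂_N, r̂_1,…,r̂_N : ℝ² → ℝ be smooth functions of (x,t). Define on ℝ³ (coordinates (x,y,t)) the functions U(x,y,t) := u(x,t), Q_i(x,y,t) := q̂_i(x,t), R_i(x,y,t) := r̂_i(x,t), and W := 0. If (U, W, Q_1,…,Q_N, R_1,…,R_N) satisfies the second type of KP equation with self-consistent sources (with auxiliary potential W), then (u, q̂_i, r̂_i) satisfies the second type of KdV equation with self-consistent sources: u_t = (1/4) u_{xxx} + 3 u u_x + (3/4) ∑_{i=1}^N (q̂_{i,xx} r̂_i − q̂_i r̂_{i,xx}), q̂_{i,t} = q̂_{i,xxx} + 3 u q̂_{i,x} + (3/2) q̂_i ∑_{j=1}^N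 q̂_j r̂_j + (3/2) u_x q̂_i, r̂_{i,t} = r̂_{i,xxx} + 3 u r̂_{i,x} − (3/2) r̂_i ∑_{j=1}^N q̂_j r̂_j + (3/2) u_x r̂_i. (This is the 2-constrained reduction of the extended KP hierarchy to the k-constrained KP hierarchy; the resulting system is the Yajima–Oikawa system.) -/
lemma liftX {F : ℝ × ℝ × ℝ → ℝ} {f : ℝ × ℝ → ℝ}
    (h : ∀ x y t, F (x, y, t) = f (x, t)) :
    ∀ x y t : ℝ, pX F (x, y, t) = dX f (x, t) := by
  intro x y t
  unfold pX dX
  congr 1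
  funext s
  exact h s y t

lemma liftT {F : ℝ × ℝ × ℝ → ℝ} {f : ℝ × ℝ → ℝ}
    (h : ∀ x y t, F (x, y, t) = f (x, t)) :
    ∀ x y t : ℝ, pT F (x, y, t) = dS f (x, t) := by
  intro x y t
  unfold pT dS
  congr 1
  funext s
  exact h x y s

lemma liftY {F : ℝ × ℝ × ℝ → ℝ} {f : ℝ × ℝ → ℝ}
    (h : ∀ x y t, F (x, y, t) = f (x, t)) :
    ∀ x y t : ℝ, pY F (x, y, t) = 0 := by
  intro x y t
  unfold pY
  have : (fun s => F (x, s, t)) = fun _ => f (x, t) := by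
    funext s; exact h x s t
  rw [this, deriv_const]

/-- the 2-constrained reduction of KPSCS-2 (`y`-independent solutions with
vanishing potential `W`) yields the second type of KdV equation with self-consistent
sources (the Yajima–Oikawa system). Here the second coordinate of `ℝ²` is `t`. -/
theorem stmt_10 (N : ℕ) (hN : 0 < N)
    (u : ℝ × ℝ → ℝ) (qh rh : Fin N → ℝ × ℝ → ℝ)
    (hu : ContDiff ℝ (⊤ : ℕ∞) u)
    (hqh : ∀ i, ContDiff ℝ (⊤ : ℕ∞) (qh i)) (hrh : ∀ i, ContDiff ℝ (⊤ : ℕ∞) (rh i))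
    (U W : ℝ × ℝ × ℝ → ℝ) (Q R : Fin N → ℝ × ℝ × ℝ → ℝ)
    (hU : ∀ x y t : ℝ, U (x, y, t) = u (x, t))
    (hW : ∀ p, W p = 0)
    (hQ : ∀ i, ∀ x y t : ℝ, Q i (x, y, t) = qh i (x, t))
    (hR : ∀ i, ∀ x y t : ℝ, R i (x, y, t) = rh i (x, t))
    (hmain : ∀ p, 4 * pT U p - 12 * U p * pX U p - pX (pX (pX U)) p - 3 * pY W p
        = 3 * ∑ i, (pX (pX (Q i)) p * R i p - Q i p * pX (pX (R i)) p
            + pY (fun z => Q i z * R i z) p))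
    (hQt : ∀ i, ∀ p, pT (Q i) p = pX (pX (pX (Q i))) p + 3 * U p * pX (Q i) p
        + (3/2) * Q i p * W p + (3/2) * Q i p * ∑ j, Q j p * R j p
        + (3/2) * pX U p * Q i p)
    (hRt : ∀ i, ∀ p, pT (R i) p = pX (pX (pX (R i))) p + 3 * U p * pX (R i) p
        - (3/2) * R i p * W p - (3/2) * R i p * ∑ j, Q j p * R j p
        + (3/2) * pX U p * R i p) :
    (∀ p, dS u p = (1/4) * dX (dX (dX u)) p + 3 * u p * dX u p
        + (3/4) * ∑ i, (dX (dX (qh i)) p * rh i p - qh i p * dX (dX (rh i)) p))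
    ∧ (∀ i, ∀ p, dS (qh i) p = dX (dX (dX (qh i))) p + 3 * u p * dX (qh i) p
        + (3/2) * qh i p * ∑ j, qh j p * rh j p + (3/2) * dX u p * qh i p)
    ∧ (∀ i, ∀ p, dS (rh i) p = dX (dX (dX (rh i))) p + 3 * u p * dX (rh i) p
        - (3/2) * rh i p * ∑ j, qh j p * rh j p + (3/2) * dX u p * rh i p) := by
  have hUx := liftX hU
  have hUxx := liftX hUx
  have hUxxx := liftX hUxx
  have hUt := liftT hU
  have hQx := fun i => liftX (hQ i)
  have hQxx := fun i => liftX (hQx i)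
  have hQxxx := fun i => liftX (hQxx i)
  have hQT := fun i => liftT (hQ i)
  have hRx := fun i => liftX (hR i)
  have hRxx := fun i => liftX (hRx i)
  have hRxxx := fun i => liftX (hRxx i)
  have hRT := fun i => liftT (hR i)
  have hWy := liftY (F := W) (f := fun _ => (0 : ℝ)) (fun x y t => hW _)
  have hQRy : ∀ i, ∀ x y t : ℝ, pY (fun z => Q i z * R i z) (x, y, t) = 0 := by
    intro i
    exact liftY (f := fun p => qh i p * rh i p) (fun x y t => by rw [hQ, hR])
  refine ⟨?_, ?_, ?_⟩
  · rintro ⟨x, t⟩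
    have h := hmain (x, 0, t)
    rw [hUt, hU, hUx, hUxxx, hWy] at h
    have hsum : ∀ i : Fin N,
        pX (pX (Q i)) (x, 0, t) * R i (x, 0, t) - Q i (x, 0, t) * pX (pX (R i)) (x, 0, t)
          + pY (fun z => Q i z * R i z) (x, 0, t)
        = dX (dX (qh i)) (x, t) * rh i (x, t) - qh i (x, t) * dX (dX (rh i)) (x, t) := by
      intro i
      rw [hQxx, hRxx, hQ, hR, hQRy]
      ring
    rw [Finset.sum_congr rfl (fun i _ => hsum i)] at h
    linarith
  · rintro i ⟨x, t⟩
    have h := hQt i (x, 0, t)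
    rw [hQT, hQxxx, hU, hQx, hQ, hW, hUx] at h
    rw [h]
    have hs : ∀ j : Fin N, Q j (x, 0, t) * R j (x, 0, t) = qh j (x, t) * rh j (x, t) := by
      intro j; rw [hQ, hR]
    rw [Finset.sum_congr rfl (fun j _ => hs j)]
    ring
  · rintro i ⟨x, t⟩
    have h := hRt i (x, 0, t)
    rw [hRT, hRxxx, hU, hRx, hR, hW, hUx] at h
    rw [h]
    have hs : ∀ j : Fin N, Q j (x, 0, t) * R j (x, 0, t) = qh j (x, t) * rh j (x, t) := by
      intro j; rw [hQ, hR]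
    rw [Finset.sum_congr rfl (fun j _ => hs j)]
    ring
end

section
/- Let N be a positive integer and let u, q̂_1,…,q̂_N, r̂_1,…,r̂_N : ℝ² → ℝ be smooth functions of (x,y). Define on ℝ³ (coordinates (x,y,t)) the functions U(x,y,t) := u(x,y), Q_i(x,y,t) := q̂_i(x,y), R_i(x,y,t) := r̂_i(x,y). If (U, Q_1,…,Q_N, R_1,…,R_N) satisfies the first type of KP equation with self-consistent sources, then (u, q̂_i, r̂_i), with y regarded as the time variable, satisfies the second type of Boussinesq equation with self-consistent sources: u_{yy} + (1/3) u_{xxxx} + 2 (u²)_{xx} − (4/3) ∑_{i=1}^N (q̂_i r̂_i)_{xx} = 0, q̂_{i,y} = q̂_{i,xx} + 2 u q̂_i, r̂_{i,y} = −r̂_{i,xx} − 2 u r̂_i. (This is the 3-constrained reduction of the extended KP hierarchy to the k-constrained KP hierarchy.) -/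
/-- Lift of a function on `ℝ²` to a `t`-independent function on `ℝ³`. -/
noncomputable def lift2 (f : ℝ × ℝ → ℝ) : ℝ × ℝ × ℝ → ℝ := fun z => f (z.1, z.2.1)

lemma pT_lift_s11 (f : ℝ × ℝ → ℝ) (z : ℝ × ℝ × ℝ) : pT (lift2 f) z = 0 :=
  deriv_const z.2.2 (f (z.1, z.2.1))

lemma lineX_hasDerivAt {f : ℝ × ℝ → ℝ} (hf : ContDiff ℝ (⊤ : ℕ∞) f) (x y : ℝ) :
    HasDerivAt (fun s => f (s, y)) (fderiv ℝ f (x, y) (1, 0)) x := by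
  have h1 : HasDerivAt (fun s : ℝ => (s, y)) ((1 : ℝ), (0 : ℝ)) x :=
    (hasDerivAt_id x).prodMk (hasDerivAt_const x y)
  exact (hf.differentiable (by simp) (x, y)).hasFDerivAt.comp_hasDerivAt x h1

lemma dX_apply' {f : ℝ × ℝ → ℝ} (hf : ContDiff ℝ (⊤ : ℕ∞) f) (x y : ℝ) :
    dX f (x, y) = fderiv ℝ f (x, y) (1, 0) :=
  (lineX_hasDerivAt hf x y).deriv

lemma hX {f : ℝ × ℝ → ℝ} (hf : ContDiff ℝ (⊤ : ℕ∞) f) (x y : ℝ) :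
    HasDerivAt (fun s => f (s, y)) (dX f (x, y)) x := by
  have h := lineX_hasDerivAt hf x y
  rwa [← dX_apply' hf x y] at h

lemma dX_smooth {f : ℝ × ℝ → ℝ} (hf : ContDiff ℝ (⊤ : ℕ∞) f) : ContDiff ℝ (⊤ : ℕ∞) (dX f) := by
  have : dX f = fun w => fderiv ℝ f w (1, 0) := by
    funext w; obtain ⟨x, y⟩ := w; exact dX_apply' hf x y
  rw [this]
  exact (hf.fderiv_right (by simp)).clm_apply contDiff_const

/-- the 3-constrained reduction of KPSCS-1 (`t`-independent solutions)
yields the second type of Boussinesq equation with self-consistent sources, with `y`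
as the time variable. Here the coordinates of `ℝ²` are `(x, y)` (so `dS` is `∂/∂y`). -/
theorem stmt_11 (N : ℕ) (hN : 0 < N)
    (u : ℝ × ℝ → ℝ) (qh rh : Fin N → ℝ × ℝ → ℝ)
    (hu : ContDiff ℝ (⊤ : ℕ∞) u)
    (hqh : ∀ i, ContDiff ℝ (⊤ : ℕ∞) (qh i)) (hrh : ∀ i, ContDiff ℝ (⊤ : ℕ∞) (rh i))
    (U : ℝ × ℝ × ℝ → ℝ) (Q R : Fin N → ℝ × ℝ × ℝ → ℝ)
    (hU : ∀ x y t : ℝ, U (x, y, t) = u (x, y))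
    (hQ : ∀ i, ∀ x y t : ℝ, Q i (x, y, t) = qh i (x, y))
    (hR : ∀ i, ∀ x y t : ℝ, R i (x, y, t) = rh i (x, y))
    (hmain : ∀ p, pX (fun z => 4 * pT U z - 12 * U z * pX U z - pX (pX (pX U)) z) p
        - 3 * pY (pY U) p + 4 * ∑ i, pX (pX (fun z => Q i z * R i z)) p = 0)
    (hQy : ∀ i, ∀ p, pY (Q i) p = pX (pX (Q i)) p + 2 * U p * Q i p)
    (hRy : ∀ i, ∀ p, pY (R i) p = -(pX (pX (R i)) p) - 2 * U p * R i p) :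
    (∀ p, dS (dS u) p + (1/3) * dX (dX (dX (dX u))) p
        + 2 * dX (dX (fun z => u z ^ 2)) p
        - (4/3) * ∑ i, dX (dX (fun z => qh i z * rh i z)) p = 0)
    ∧ (∀ i, ∀ p, dS (qh i) p = dX (dX (qh i)) p + 2 * u p * qh i p)
    ∧ (∀ i, ∀ p, dS (rh i) p = -(dX (dX (rh i)) p) - 2 * u p * rh i p) := by
  have hUe : U = lift2 u := by
    funext z; obtain ⟨x, y, t⟩ := z; exact hU x y t
  have hQe : Q = fun i => lift2 (qh i) := by
    funext i z; obtain ⟨x, y, t⟩ := z; exact hQ i x y t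
  have hRe : R = fun i => lift2 (rh i) := by
    funext i z; obtain ⟨x, y, t⟩ := z; exact hR i x y t
  simp only [hUe, hQe, hRe, pT_lift_s11] at hmain hQy hRy
  refine ⟨?_, ?_, ?_⟩
  · rintro ⟨x, y⟩
    -- notation
    have hu1 := dX_smooth hu
    have hu2 := dX_smooth hu1
    have hu3 := dX_smooth hu2
    have hA := hX hu x y
    have hB := hX hu1 x y
    have hC := hX hu3 x y
    -- the main equation at (x, y, 0), with `pX`/`pY` converted to `dX`/`dS`
    have key : dX (fun w : ℝ × ℝ => 4 * (0:ℝ) - 12 * u w * dX u w - dX (dX (dX u)) w) (x, y)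
        - 3 * dS (dS u) (x, y)
        + 4 * ∑ i, dX (dX (fun z => qh i z * rh i z)) (x, y) = 0 := hmain (x, y, 0)
    -- compute the first `dX` in `key`
    have eG : dX (fun w : ℝ × ℝ => 4 * (0:ℝ) - 12 * u w * dX u w - dX (dX (dX u)) w) (x, y)
        = -(12 * (dX u (x, y) * dX u (x, y) + u (x, y) * dX (dX u) (x, y)))
          - dX (dX (dX (dX u))) (x, y) := by
      have h := (HasDerivAt.const_sub ((4:ℝ) * 0) ((hA.mul hB).const_mul 12)).sub hC
      have h2 := h.deriv
      show deriv (fun s => 4 * (0:ℝ) - 12 * u (s, y) * dX u (s, y) - dX (dX (dX u)) (s, y)) x = _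
      rw [show (fun s => 4 * (0:ℝ) - 12 * u (s, y) * dX u (s, y) - dX (dX (dX u)) (s, y))
          = (fun s => 4 * (0:ℝ) - 12 * (u (s, y) * dX u (s, y)) - dX (dX (dX u)) (s, y)) from by
        funext s; ring]
      exact h2
    -- compute `dX (dX (u ^ 2))`
    have hsq : dX (fun z => u z ^ 2) = fun w => 2 * (u w * dX u w) := by
      funext w; obtain ⟨a, b⟩ := w
      have h := ((hX hu a b).fun_pow 2).deriv
      show deriv (fun s => u (s, b) ^ 2) a = _
      rw [h]; ring
    have eSq : dX (dX (fun z => u z ^ 2)) (x, y)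
        = 2 * (dX u (x, y) * dX u (x, y) + u (x, y) * dX (dX u) (x, y)) := by
      rw [hsq]
      exact ((hA.mul hB).const_mul 2).deriv
    rw [eG] at key
    rw [eSq]
    linarith
  · intro i
    rintro ⟨x, y⟩
    exact hQy i (x, y, 0)
  · intro i
    rintro ⟨x, y⟩
    exact hRy i (x, y, 0)
end

section
/- Let N be a positive integer and let u, q_1,…,q_N, r_1,…,r_N, ψ, φ_1,…,φ_N : ℝ² → ℝ be smooth functions of (x,t). Assume: (i) u_t = (1/4) u_{xxx} + 3 u u_x + (3/4) ∑_{i=1}^N (q_{i,xx} r_i − q_i r_{i,xx}); (ii) q_{i,t} = q_{i,xxx} + 3 u q_{i,x} + (3/2) q_i ∑_{j=1}^N q_j r_j + (3/2) u_x q_i and r_{i,t} = r_{i,xxx} + 3 u r_{i,x} − (3/2) r_i ∑_{j=1}^N q_j r_j + (3/2) u_x r_i; (iii) ψ_t = ψ_{xxx} + 3 u ψ_x + (3/2)(u_x + ∑_{j=1}^N q_j r_j) ψ; (iv) φ_{i,x} = r_i ψ and φ_{i,t} = r_{i,xx} ψ − r_{i,x} ψ_x + r_i ψ_{xx} + 3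 u r_i ψ for i = 1,…,N. Define Ξ := ψ_{xx} + 2 u ψ + ∑_{i=1}^N q_i φ_i. Then Ξ_t = Ξ_{xxx} + 3 u Ξ_x + (3/2)(u_x + ∑_{j=1}^N q_j r_j) Ξ. (This expresses that the third-order flow preserves the eigenvalue problem (∂² + 2u + ∑ q_i ∂^{-1} r_i)ψ = λψ of the 2-constrained KP hierarchy: if Ξ = λψ at an initial time then it remains so, giving the Lax representation of the second type of KdV equation with self-consistent sources.) -/
open ContDiff Finset

/-- Smoothness abbreviation. -/
abbrev YOSm (f : ℝ × ℝ → ℝ) : Prop := ContDiff ℝ ∞ f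

lemma YO.le1 : (∞ : WithTop ℕ∞) ≠ 0 := by simp
lemma YO.leS : ∞ + 1 ≤ (∞ : WithTop ℕ∞) := by simp

lemma YO.sliceX {f : ℝ × ℝ → ℝ} (hf : YOSm f) (t : ℝ) :
    Differentiable ℝ (fun s => f (s, t)) :=
  (hf.differentiable YO.le1).comp (differentiable_id.prodMk (differentiable_const t))

lemma YO.sliceS {f : ℝ × ℝ → ℝ} (hf : YOSm f) (x : ℝ) :
    Differentiable ℝ (fun s => f (x, s)) :=
  (hf.differentiable YO.le1).comp ((differentiable_const x).prodMk differentiable_id)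

lemma YO.hasDX {f : ℝ × ℝ → ℝ} (hf : YOSm f) (p : ℝ × ℝ) :
    HasDerivAt (fun s => f (s, p.2)) (dX f p) p.1 :=
  (YO.sliceX hf p.2 p.1).hasDerivAt

lemma YO.hasDS {f : ℝ × ℝ → ℝ} (hf : YOSm f) (p : ℝ × ℝ) :
    HasDerivAt (fun s => f (p.1, s)) (dS f p) p.2 :=
  (YO.sliceS hf p.1 p.2).hasDerivAt

lemma YO.dX_fderiv {f : ℝ × ℝ → ℝ} (hf : YOSm f) (p : ℝ × ℝ) :
    dX f p = fderiv ℝ f p (1, 0) := by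
  have h1 : HasDerivAt (fun s : ℝ => ((s, p.2) : ℝ × ℝ)) (1, 0) p.1 :=
    HasDerivAt.prodMk (hasDerivAt_id p.1) (hasDerivAt_const p.1 p.2)
  have h2 : HasFDerivAt f (fderiv ℝ f p) (p.1, p.2) := by
    simpa using ((hf.differentiable YO.le1) p).hasFDerivAt
  have := h2.comp_hasDerivAt p.1 h1
  simpa [dX, Function.comp_def] using this.deriv

lemma YO.dS_fderiv {f : ℝ × ℝ → ℝ} (hf : YOSm f) (p : ℝ × ℝ) :
    dS f p = fderiv ℝ f p (0, 1) := by
  have h1 : HasDerivAt (fun s : ℝ => ((p.1, s) : ℝ × ℝ)) (0, 1) p.2 :=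
    HasDerivAt.prodMk (hasDerivAt_const p.2 p.1) (hasDerivAt_id p.2)
  have h2 : HasFDerivAt f (fderiv ℝ f p) (p.1, p.2) := by
    simpa using ((hf.differentiable YO.le1) p).hasFDerivAt
  have := h2.comp_hasDerivAt p.2 h1
  simpa [dS, Function.comp_def] using this.deriv

lemma YO.smooth_fderiv_apply {f : ℝ × ℝ → ℝ} (hf : YOSm f) (v : ℝ × ℝ) :
    YOSm (fun p => fderiv ℝ f p v) :=
  (hf.fderiv_right YO.leS).clm_apply contDiff_const

lemma YO.smooth_dX {f : ℝ × ℝ → ℝ} (hf : YOSm f) : YOSm (dX f) := by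
  have : dX f = fun p => fderiv ℝ f p (1, 0) := funext (YO.dX_fderiv hf)
  rw [this]; exact YO.smooth_fderiv_apply hf _

lemma YO.smooth_dS {f : ℝ × ℝ → ℝ} (hf : YOSm f) : YOSm (dS f) := by
  have : dS f = fun p => fderiv ℝ f p (0, 1) := funext (YO.dS_fderiv hf)
  rw [this]; exact YO.smooth_fderiv_apply hf _

lemma YO.fderiv_apply_deriv {f : ℝ × ℝ → ℝ} (hf : YOSm f) (v w : ℝ × ℝ) (p : ℝ × ℝ) :
    fderiv ℝ (fun y => fderiv ℝ f y v) p w = fderiv ℝ (fderiv ℝ f) p w v := by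
  have hF : DifferentiableAt ℝ (fderiv ℝ f) p :=
    ((hf.fderiv_right YO.leS).differentiable YO.le1) p
  have h := hF.hasFDerivAt.clm_apply (hasFDerivAt_const v p)
  rw [h.fderiv]
  simp

lemma YO.dX_dS {f : ℝ × ℝ → ℝ} (hf : YOSm f) (p : ℝ × ℝ) :
    dX (dS f) p = dS (dX f) p := by
  have hdS : dS f = fun y => fderiv ℝ f y (0, 1) := funext (YO.dS_fderiv hf)
  have hdX : dX f = fun y => fderiv ℝ f y (1, 0) := funext (YO.dX_fderiv hf)
  rw [hdS, hdX, YO.dX_fderiv (YO.smooth_fderiv_apply hf _) p,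
    YO.dS_fderiv (YO.smooth_fderiv_apply hf _) p,
    YO.fderiv_apply_deriv hf _ _ p, YO.fderiv_apply_deriv hf _ _ p]
  exact second_derivative_symmetric
    (fun y => ((hf.differentiable YO.le1) y).hasFDerivAt)
    (((hf.fderiv_right YO.leS).differentiable YO.le1) p).hasFDerivAt (1,0) (0,1)

set_option maxHeartbeats 4000000 in
/-- the third-order flow preserves the eigenvalue problem
`(∂² + 2u + ∑ qᵢ ∂⁻¹ rᵢ)ψ = λψ` of the 2-constrained KP hierarchy, giving the Lax
representation of the second type of KdV equation with self-consistent sources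
(the Yajima–Oikawa system). Here the coordinates of `ℝ²` are `(x, t)`. -/
theorem stmt_12 (N : ℕ) (hN : 0 < N)
    (u : ℝ × ℝ → ℝ) (q r : Fin N → ℝ × ℝ → ℝ)
    (ψ : ℝ × ℝ → ℝ) (φ : Fin N → ℝ × ℝ → ℝ)
    (hu : ContDiff ℝ (⊤ : ℕ∞) u)
    (hq : ∀ i, ContDiff ℝ (⊤ : ℕ∞) (q i)) (hr : ∀ i, ContDiff ℝ (⊤ : ℕ∞) (r i))
    (hψ : ContDiff ℝ (⊤ : ℕ∞) ψ) (hφ : ∀ i, ContDiff ℝ (⊤ : ℕ∞) (φ i))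
    (h1 : ∀ p, dS u p = (1/4) * dX (dX (dX u)) p + 3 * u p * dX u p
        + (3/4) * ∑ i, (dX (dX (q i)) p * r i p - q i p * dX (dX (r i)) p))
    (h2 : ∀ i, ∀ p, dS (q i) p = dX (dX (dX (q i))) p + 3 * u p * dX (q i) p
        + (3/2) * q i p * ∑ j, q j p * r j p + (3/2) * dX u p * q i p)
    (h3 : ∀ i, ∀ p, dS (r i) p = dX (dX (dX (r i))) p + 3 * u p * dX (r i) p
        - (3/2) * r i p * ∑ j, q j p * r j p + (3/2) * dX u p * r i p)
    (h4 : ∀ p, dS ψ p = dX (dX (dX ψ)) p + 3 * u p * dX ψ p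
        + (3/2) * (dX u p + ∑ j, q j p * r j p) * ψ p)
    (h5 : ∀ i, ∀ p, dX (φ i) p = r i p * ψ p)
    (h6 : ∀ i, ∀ p, dS (φ i) p = dX (dX (r i)) p * ψ p - dX (r i) p * dX ψ p
        + r i p * dX (dX ψ) p + 3 * u p * r i p * ψ p)
    (Ξ : ℝ × ℝ → ℝ)
    (hΞ : ∀ p, Ξ p = dX (dX ψ) p + 2 * u p * ψ p + ∑ i, q i p * φ i p) :
    ∀ p, dS Ξ p = dX (dX (dX Ξ)) p + 3 * u p * dX Ξ p
      + (3/2) * (dX u p + ∑ j, q j p * r j p) * Ξ p := by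
  -- smoothness bookkeeping
  have su : YOSm u := hu.of_le (by simp)
  have sψ : YOSm ψ := hψ.of_le (by simp)
  have sq' : ∀ i, YOSm (q i) := fun i => (hq i).of_le (by simp)
  have sr' : ∀ i, YOSm (r i) := fun i => (hr i).of_le (by simp)
  have sφ' : ∀ i, YOSm (φ i) := fun i => (hφ i).of_le (by simp)
  have su1 : YOSm (dX u) := YO.smooth_dX su
  have su2 : YOSm (dX (dX u)) := YO.smooth_dX su1
  have sψ1 : YOSm (dX ψ) := YO.smooth_dX sψ
  have sψ2 : YOSm (dX (dX ψ)) := YO.smooth_dX sψ1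
  have sψ3 : YOSm (dX (dX (dX ψ))) := YO.smooth_dX sψ2
  have sψ4 : YOSm (dX (dX (dX (dX ψ)))) := YO.smooth_dX sψ3
  have sq1 : ∀ i, YOSm (dX (q i)) := fun i => YO.smooth_dX (sq' i)
  have sq2 : ∀ i, YOSm (dX (dX (q i))) := fun i => YO.smooth_dX (sq1 i)
  have sr1 : ∀ i, YOSm (dX (r i)) := fun i => YO.smooth_dX (sr' i)
  have sA0 : YOSm (fun y => ∑ i, q i y * φ i y) :=
    ContDiff.sum fun i _ => (sq' i).mul (sφ' i)
  have sA1 : YOSm (fun y => ∑ i, dX (q i) y * φ i y) :=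
    ContDiff.sum fun i _ => (sq1 i).mul (sφ' i)
  have sA2 : YOSm (fun y => ∑ i, dX (dX (q i)) y * φ i y) :=
    ContDiff.sum fun i _ => (sq2 i).mul (sφ' i)
  have sSf : YOSm (fun y => ∑ i, q i y * r i y) :=
    ContDiff.sum fun i _ => (sq' i).mul (sr' i)
  have sBf : YOSm (fun y => ∑ i, dX (q i) y * r i y) :=
    ContDiff.sum fun i _ => (sq1 i).mul (sr' i)
  have sCf : YOSm (fun y => ∑ i, q i y * dX (r i) y) :=
    ContDiff.sum fun i _ => (sq' i).mul (sr1 i)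
  -- derivatives of the basic sum functions
  have hSx : ∀ p, dX (fun y => ∑ i, q i y * r i y) p
      = (∑ i, dX (q i) p * r i p) + ∑ i, q i p * dX (r i) p := by
    intro p
    calc dX (fun y => ∑ i, q i y * r i y) p
        = ∑ i, (dX (q i) p * r i p + q i p * dX (r i) p) :=
          (HasDerivAt.fun_sum fun i _ => (YO.hasDX (sq' i) p).mul (YO.hasDX (sr' i) p)).deriv
      _ = _ := Finset.sum_add_distrib
  have hBx : ∀ p, dX (fun y => ∑ i, dX (q i) y * r i y) p
      = (∑ i, dX (dX (q i)) p * r i p) + ∑ i, dX (q i) p * dX (r i) p := by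
    intro p
    calc dX (fun y => ∑ i, dX (q i) y * r i y) p
        = ∑ i, (dX (dX (q i)) p * r i p + dX (q i) p * dX (r i) p) :=
          (HasDerivAt.fun_sum fun i _ => (YO.hasDX (sq1 i) p).mul (YO.hasDX (sr' i) p)).deriv
      _ = _ := Finset.sum_add_distrib
  have hCx : ∀ p, dX (fun y => ∑ i, q i y * dX (r i) y) p
      = (∑ i, dX (q i) p * dX (r i) p) + ∑ i, q i p * dX (dX (r i)) p := by
    intro p
    calc dX (fun y => ∑ i, q i y * dX (r i) y) p
        = ∑ i, (dX (q i) p * dX (r i) p + q i p * dX (dX (r i)) p) :=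
          (HasDerivAt.fun_sum fun i _ => (YO.hasDX (sq' i) p).mul (YO.hasDX (sr1 i) p)).deriv
      _ = _ := Finset.sum_add_distrib
  have hA0x : ∀ p, dX (fun y => ∑ i, q i y * φ i y) p
      = (∑ i, dX (q i) p * φ i p) + ψ p * ∑ i, q i p * r i p := by
    intro p
    calc dX (fun y => ∑ i, q i y * φ i y) p
        = ∑ i, (dX (q i) p * φ i p + q i p * dX (φ i) p) :=
          (HasDerivAt.fun_sum fun i _ => (YO.hasDX (sq' i) p).mul (YO.hasDX (sφ' i) p)).deriv
      _ = ∑ i, (dX (q i) p * φ i p + ψ p * (q i p * r i p)) :=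
          Finset.sum_congr rfl fun i _ => by rw [h5]; ring
      _ = _ := by rw [Finset.sum_add_distrib, ← Finset.mul_sum]
  have hA1x : ∀ p, dX (fun y => ∑ i, dX (q i) y * φ i y) p
      = (∑ i, dX (dX (q i)) p * φ i p) + ψ p * ∑ i, dX (q i) p * r i p := by
    intro p
    calc dX (fun y => ∑ i, dX (q i) y * φ i y) p
        = ∑ i, (dX (dX (q i)) p * φ i p + dX (q i) p * dX (φ i) p) :=
          (HasDerivAt.fun_sum fun i _ => (YO.hasDX (sq1 i) p).mul (YO.hasDX (sφ' i) p)).deriv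
      _ = ∑ i, (dX (dX (q i)) p * φ i p + ψ p * (dX (q i) p * r i p)) :=
          Finset.sum_congr rfl fun i _ => by rw [h5]; ring
      _ = _ := by rw [Finset.sum_add_distrib, ← Finset.mul_sum]
  have hA2x : ∀ p, dX (fun y => ∑ i, dX (dX (q i)) y * φ i y) p
      = (∑ i, dX (dX (dX (q i))) p * φ i p) + ψ p * ∑ i, dX (dX (q i)) p * r i p := by
    intro p
    calc dX (fun y => ∑ i, dX (dX (q i)) y * φ i y) p
        = ∑ i, (dX (dX (dX (q i))) p * φ i p + dX (dX (q i)) p * dX (φ i) p) :=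
          (HasDerivAt.fun_sum fun i _ => (YO.hasDX (sq2 i) p).mul (YO.hasDX (sφ' i) p)).deriv
      _ = ∑ i, (dX (dX (dX (q i))) p * φ i p + ψ p * (dX (dX (q i)) p * r i p)) :=
          Finset.sum_congr rfl fun i _ => by rw [h5]; ring
      _ = _ := by rw [Finset.sum_add_distrib, ← Finset.mul_sum]
  -- HasDerivAt forms of the above
  have hdSf : ∀ p : ℝ × ℝ, HasDerivAt (fun s => (fun y => ∑ i, q i y * r i y) (s, p.2))
      ((∑ i, dX (q i) p * r i p) + ∑ i, q i p * dX (r i) p) p.1 := by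
    intro p; have h := YO.hasDX sSf p; rwa [hSx p] at h
  have hdBf : ∀ p : ℝ × ℝ, HasDerivAt (fun s => (fun y => ∑ i, dX (q i) y * r i y) (s, p.2))
      ((∑ i, dX (dX (q i)) p * r i p) + ∑ i, dX (q i) p * dX (r i) p) p.1 := by
    intro p; have h := YO.hasDX sBf p; rwa [hBx p] at h
  have hdCf : ∀ p : ℝ × ℝ, HasDerivAt (fun s => (fun y => ∑ i, q i y * dX (r i) y) (s, p.2))
      ((∑ i, dX (q i) p * dX (r i) p) + ∑ i, q i p * dX (dX (r i)) p) p.1 := by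
    intro p; have h := YO.hasDX sCf p; rwa [hCx p] at h
  have hdA0 : ∀ p : ℝ × ℝ, HasDerivAt (fun s => (fun y => ∑ i, q i y * φ i y) (s, p.2))
      ((∑ i, dX (q i) p * φ i p) + ψ p * ∑ i, q i p * r i p) p.1 := by
    intro p; have h := YO.hasDX sA0 p; rwa [hA0x p] at h
  have hdA1 : ∀ p : ℝ × ℝ, HasDerivAt (fun s => (fun y => ∑ i, dX (q i) y * φ i y) (s, p.2))
      ((∑ i, dX (dX (q i)) p * φ i p) + ψ p * ∑ i, dX (q i) p * r i p) p.1 := by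
    intro p; have h := YO.hasDX sA1 p; rwa [hA1x p] at h
  have hdA2 : ∀ p : ℝ × ℝ, HasDerivAt (fun s => (fun y => ∑ i, dX (dX (q i)) y * φ i y) (s, p.2))
      ((∑ i, dX (dX (dX (q i))) p * φ i p) + ψ p * ∑ i, dX (dX (q i)) p * r i p) p.1 := by
    intro p; have h := YO.hasDX sA2 p; rwa [hA2x p] at h
  -- x-derivatives of Ξ
  have hΞf : Ξ = fun y => dX (dX ψ) y + 2 * u y * ψ y + ∑ i, q i y * φ i y := funext hΞ
  have hΞx : ∀ p, dX Ξ p = dX (dX (dX ψ)) p + (2 * dX u p * ψ p + 2 * u p * dX ψ p)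
      + ((∑ i, dX (q i) p * φ i p) + ψ p * ∑ i, q i p * r i p) := by
    intro p; rw [hΞf]
    exact (((YO.hasDX sψ2 p).add (((YO.hasDX su p).const_mul 2).mul (YO.hasDX sψ p))).add
      (hdA0 p)).deriv
  have hΞxf : dX Ξ = fun y => dX (dX (dX ψ)) y + (2 * dX u y * ψ y + 2 * u y * dX ψ y)
      + ((∑ i, dX (q i) y * φ i y) + ψ y * ∑ i, q i y * r i y) := funext hΞx
  have hΞxx : ∀ p, dX (dX Ξ) p = dX (dX (dX (dX ψ))) p
      + ((2 * dX (dX u) p * ψ p + 2 * dX u p * dX ψ p)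
        + (2 * dX u p * dX ψ p + 2 * u p * dX (dX ψ) p))
      + (((∑ i, dX (dX (q i)) p * φ i p) + ψ p * ∑ i, dX (q i) p * r i p)
        + (dX ψ p * ∑ i, q i p * r i p
          + ψ p * ((∑ i, dX (q i) p * r i p) + ∑ i, q i p * dX (r i) p))) := by
    intro p; rw [hΞxf]
    exact (((YO.hasDX sψ3 p).add
      ((((YO.hasDX su1 p).const_mul 2).mul (YO.hasDX sψ p)).add
        (((YO.hasDX su p).const_mul 2).mul (YO.hasDX sψ1 p)))).add
      ((hdA1 p).add ((YO.hasDX sψ p).mul (hdSf p)))).deriv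
  have hΞxxf : dX (dX Ξ) = fun y => dX (dX (dX (dX ψ))) y
      + ((2 * dX (dX u) y * ψ y + 2 * dX u y * dX ψ y)
        + (2 * dX u y * dX ψ y + 2 * u y * dX (dX ψ) y))
      + (((∑ i, dX (dX (q i)) y * φ i y) + ψ y * ∑ i, dX (q i) y * r i y)
        + (dX ψ y * ∑ i, q i y * r i y
          + ψ y * ((∑ i, dX (q i) y * r i y) + ∑ i, q i y * dX (r i) y))) := funext hΞxx
  have hΞxxx : ∀ p, dX (dX (dX Ξ)) p = dX (dX (dX (dX (dX ψ)))) p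
      + (((2 * dX (dX (dX u)) p * ψ p + 2 * dX (dX u) p * dX ψ p)
          + (2 * dX (dX u) p * dX ψ p + 2 * dX u p * dX (dX ψ) p))
        + ((2 * dX (dX u) p * dX ψ p + 2 * dX u p * dX (dX ψ) p)
          + (2 * dX u p * dX (dX ψ) p + 2 * u p * dX (dX (dX ψ)) p)))
      + (((((∑ i, dX (dX (dX (q i))) p * φ i p) + ψ p * ∑ i, dX (dX (q i)) p * r i p)
          + (dX ψ p * ∑ i, dX (q i) p * r i p
            + ψ p * ((∑ i, dX (dX (q i)) p * r i p) + ∑ i, dX (q i) p * dX (r i) p))))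
        + ((dX (dX ψ) p * ∑ i, q i p * r i p
            + dX ψ p * ((∑ i, dX (q i) p * r i p) + ∑ i, q i p * dX (r i) p))
          + (dX ψ p * ((∑ i, dX (q i) p * r i p) + ∑ i, q i p * dX (r i) p)
            + ψ p * (((∑ i, dX (dX (q i)) p * r i p) + ∑ i, dX (q i) p * dX (r i) p)
              + ((∑ i, dX (q i) p * dX (r i) p) + ∑ i, q i p * dX (dX (r i)) p))))) := by
    intro p; rw [hΞxxf]
    exact (((YO.hasDX sψ4 p).add
      (((((YO.hasDX su2 p).const_mul 2).mul (YO.hasDX sψ p)).add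
        (((YO.hasDX su1 p).const_mul 2).mul (YO.hasDX sψ1 p))).add
       ((((YO.hasDX su1 p).const_mul 2).mul (YO.hasDX sψ1 p)).add
        (((YO.hasDX su p).const_mul 2).mul (YO.hasDX sψ2 p))))).add
      (((hdA2 p).add ((YO.hasDX sψ p).mul (hdBf p))).add
        (((YO.hasDX sψ1 p).mul (hdSf p)).add
          ((YO.hasDX sψ p).mul ((hdBf p).add (hdCf p)))))).deriv
  -- t-derivative of Ξ, and commuting mixed partials
  have hΞt : ∀ p, dS Ξ p = dS (dX (dX ψ)) p + (2 * dS u p * ψ p + 2 * u p * dS ψ p)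
      + ∑ i, (dS (q i) p * φ i p + q i p * dS (φ i) p) := by
    intro p; rw [hΞf]
    exact (((YO.hasDS sψ2 p).add (((YO.hasDS su p).const_mul 2).mul (YO.hasDS sψ p))).add
      (HasDerivAt.fun_sum fun i _ => (YO.hasDS (sq' i) p).mul (YO.hasDS (sφ' i) p))).deriv
  have hcomm : ∀ p, dS (dX (dX ψ)) p = dX (dX (dS ψ)) p := by
    intro p
    have e1 : dS (dX ψ) = dX (dS ψ) := funext fun y => (YO.dX_dS sψ y).symm
    have e2 : dS (dX (dX ψ)) p = dX (dS (dX ψ)) p := (YO.dX_dS sψ1 p).symm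
    rw [e2, e1]
  -- x-derivatives of the evolution of ψ
  have hψtf : dS ψ = fun y => dX (dX (dX ψ)) y + 3 * u y * dX ψ y
      + (3/2) * (dX u y + ∑ j, q j y * r j y) * ψ y := funext h4
  have hT1 : ∀ p, dX (dS ψ) p = dX (dX (dX (dX ψ))) p
      + (3 * dX u p * dX ψ p + 3 * u p * dX (dX ψ) p)
      + ((3/2) * (dX (dX u) p + ((∑ i, dX (q i) p * r i p) + ∑ i, q i p * dX (r i) p)) * ψ p
        + (3/2) * (dX u p + ∑ j, q j p * r j p) * dX ψ p) := by
    intro p; rw [hψtf]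
    exact (((YO.hasDX sψ3 p).add (((YO.hasDX su p).const_mul 3).mul (YO.hasDX sψ1 p))).add
      ((((YO.hasDX su1 p).add (hdSf p)).const_mul (3/2)).mul (YO.hasDX sψ p))).deriv
  have hT1f : dX (dS ψ) = fun y => dX (dX (dX (dX ψ))) y
      + (3 * dX u y * dX ψ y + 3 * u y * dX (dX ψ) y)
      + ((3/2) * (dX (dX u) y + ((∑ i, dX (q i) y * r i y) + ∑ i, q i y * dX (r i) y)) * ψ y
        + (3/2) * (dX u y + ∑ j, q j y * r j y) * dX ψ y) := funext hT1
  have hT2 : ∀ p, dX (dX (dS ψ)) p = dX (dX (dX (dX (dX ψ)))) p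
      + ((3 * dX (dX u) p * dX ψ p + 3 * dX u p * dX (dX ψ) p)
        + (3 * dX u p * dX (dX ψ) p + 3 * u p * dX (dX (dX ψ)) p))
      + (((3/2) * (dX (dX (dX u)) p
            + (((∑ i, dX (dX (q i)) p * r i p) + ∑ i, dX (q i) p * dX (r i) p)
              + ((∑ i, dX (q i) p * dX (r i) p) + ∑ i, q i p * dX (dX (r i)) p))) * ψ p
          + (3/2) * (dX (dX u) p + ((∑ i, dX (q i) p * r i p) + ∑ i, q i p * dX (r i) p)) * dX ψ p)
        + ((3/2) * (dX (dX u) p + ((∑ i, dX (q i) p * r i p) + ∑ i, q i p * dX (r i) p)) * dX ψ p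
          + (3/2) * (dX u p + ∑ j, q j p * r j p) * dX (dX ψ) p)) := by
    intro p; rw [hT1f]
    exact (((YO.hasDX sψ4 p).add
      ((((YO.hasDX su1 p).const_mul 3).mul (YO.hasDX sψ1 p)).add
        (((YO.hasDX su p).const_mul 3).mul (YO.hasDX sψ2 p)))).add
      (((((YO.hasDX su2 p).add ((hdBf p).add (hdCf p))).const_mul (3/2)).mul
          (YO.hasDX sψ p)).add
        ((((YO.hasDX su1 p).add (hdSf p)).const_mul (3/2)).mul (YO.hasDX sψ1 p)))).deriv
  -- the source-sum in the t-derivative, in atomic form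
  have hsum_t : ∀ p, (∑ i, (dS (q i) p * φ i p + q i p * dS (φ i) p))
      = (∑ i, dX (dX (dX (q i))) p * φ i p) + 3 * u p * ∑ i, dX (q i) p * φ i p
        + (3/2) * (∑ j, q j p * r j p) * ∑ i, q i p * φ i p
        + (3/2) * dX u p * ∑ i, q i p * φ i p
        + (ψ p * ∑ i, q i p * dX (dX (r i)) p - dX ψ p * ∑ i, q i p * dX (r i) p
          + dX (dX ψ) p * ∑ i, q i p * r i p + 3 * u p * ψ p * ∑ i, q i p * r i p) := by
    intro p
    calc (∑ i, (dS (q i) p * φ i p + q i p * dS (φ i) p))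
        = ∑ i, (dX (dX (dX (q i))) p * φ i p + 3 * u p * (dX (q i) p * φ i p)
            + (3/2) * (∑ j, q j p * r j p) * (q i p * φ i p)
            + (3/2) * dX u p * (q i p * φ i p)
            + (ψ p * (q i p * dX (dX (r i)) p) - dX ψ p * (q i p * dX (r i) p)
              + dX (dX ψ) p * (q i p * r i p) + 3 * u p * ψ p * (q i p * r i p))) :=
          Finset.sum_congr rfl fun i _ => by rw [h2, h6]; ring
      _ = _ := by
          simp only [Finset.sum_add_distrib, Finset.sum_sub_distrib, ← Finset.mul_sum]
  -- final assembly
  intro p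
  rw [hΞt p, hsum_t p, hcomm p, hT2 p, h1 p, h4 p, hΞxxx p, hΞx p, hΞ p,
    Finset.sum_sub_distrib]
  ring
end
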